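/- arXiv:0806.0906 — 8 statements merged into one kernel-verified Lean document; each statement's English description precedes it below -/
import Mathlib

section
/- Let G be a finite simple graph and let e = {s,t} be any edge of G. Then β(G) = β(G − e) + β(G/e) + β(G − [e]), where the empty graph is assigned β(∅) = 1 (which is automatic from the definition of β). -/
/-- One commutation move: swap two consecutive letters that are non-adjacent in `G`. -/
def CommStep {V : Type*} (G : SimpleGraph V) (w w' : List V) : Prop :=
  ∃ (a b : V) (u v : List V),
    ¬ G.Adj a b ∧ w = u ++ a :: b :: v ∧ w' = u ++ b :: a :: v

/-- Commutation equivalence of words: the equivalence relation generated by commutation moves. -/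
def commSetoid {V : Type*} (G : SimpleGraph V) : Setoid (List V) :=
  ⟨Relation.EqvGen (CommStep G), Relation.EqvGen.is_equivalence _⟩

/-- `bWords G k` = number of commutation classes of injective words of length `k` on `G`. -/
noncomputable def bWords {V : Type*} (G : SimpleGraph V) (k : ℕ) : ℕ :=
  Nat.card (Quotient (Setoid.comap
    (fun w : {w : List V // w.Nodup ∧ w.length = k} => w.1) (commSetoid G)))

/-- The boolean number `β(G) = (-1)^{|V|} ∑_{k=0}^{|V|} (-1)^k b_k(G)`. -/
noncomputable def booleanNumber {V : Type*} (G : SimpleGraph V) [Fintype V] : ℤ :=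
  (-1) ^ (Fintype.card V) *
    ∑ k ∈ Finset.range (Fintype.card V + 1), (-1) ^ k * (bWords G k : ℤ)

/-- Simple contraction of the edge `{s,t}` of `G`: the endpoints `s,t` are removed and
replaced by a single new vertex (here `none`), adjacent to every vertex that was adjacent
to `s` or to `t`; all other adjacencies are unchanged, and loops/multiple edges are discarded. -/
def contractEdge {V : Type*} (G : SimpleGraph V) (s t : V) :
    SimpleGraph (Option {v : V // v ≠ s ∧ v ≠ t}) where
  Adj a b :=
    match a, b with
    | some u, some v => G.Adj u.1 v.1
    | some u, none => G.Adj u.1 s ∨ G.Adj u.1 t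
    | none, some v => G.Adj v.1 s ∨ G.Adj v.1 t
    | none, none => False
  symm := by
    constructor
    rintro (_ | u) (_ | v) h
    · exact h
    · exact h
    · exact h
    · exact h.symm
  loopless := by
    constructor
    rintro (_ | u) h
    · exact h
    · exact G.irrefl h

/-!
Commutation classes of injective words with letter set `S` correspond to acyclic orientations of
the induced subgraph `G[S]` (a word orients each edge from its earlier to its later endpoint), so
`β(G) = ∑_S (-1)^{|V| - |S|} a(G[S])`, where `a` counts acyclic orientations.

Fix `S ⊇ {s, t}`. Deleting the arc between `s` and `t` maps the acyclic orientations of `G[S]`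
onto those of `(G - e)[S]`; such an orientation has two preimages exactly when no directed path
joins `s` and `t`, and these orientations are the ones that descend to acyclic orientations of the
contraction. Hence `a(G[S]) = a((G - e)[S]) + a((G/e)[S/e])`, while `a(G[S]) = a((G - e)[S])`
when `S` misses `s` or `t`. In the signed sums, the sets `S ⊇ {s, t}` correspond to the subsets of
`V(G/e)` containing the new vertex, and the remaining subsets of `V(G/e)` contribute `β(G - [e])`.
-/

open Relation
open scoped List

section
variable {V : Type*}

section Relations
variable {α β : Type*}

lemma Relation.TransGen.or_arc {q : α → α → Prop} {s t a b : α}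
    (h : TransGen (fun x y => q x y ∨ x = s ∧ y = t) a b) :
    TransGen q a b ∨ ReflTransGen q a s ∧ ReflTransGen q t b := by
  induction h with
  | single h =>
    rcases h with h | ⟨rfl, rfl⟩
    exacts [.inl (.single h), .inr ⟨.refl, .refl⟩]
  | tail _ h ih =>
    rcases h with h | ⟨rfl, rfl⟩
    · exact ih.imp (·.tail h) fun ⟨h₁, h₂⟩ => ⟨h₁, h₂.tail h⟩
    · exact .inr ⟨ih.elim (·.to_reflTransGen) And.left, .refl⟩

/-- A cycle downstairs lifts to a `q`-path that jumps inside `P` at most once, hence to a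
`q`-cycle or to a `q`-path between two points of `P`. -/
lemma Relation.not_transGen_map_self {q : α → α → Prop} {π : α → β} {P : α → Prop}
    (hπ : ∀ a b, π a = π b → a = b ∨ P a ∧ P b) (hq : ∀ a, ¬ TransGen q a a)
    (hP : ∀ a b, P a → P b → ¬ TransGen q a b) (x : β) :
    ¬ TransGen (Relation.Map q π π) x x := by
  have lift : ∀ {x y}, TransGen (Relation.Map q π π) x y → ∃ a b, π a = x ∧ π b = y ∧
      (TransGen q a b ∨ ∃ c d, P c ∧ P d ∧ ReflTransGen q a c ∧ TransGen q d b) := by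
    intro x y h
    induction h with
    | single h =>
      obtain ⟨a, b, hab, rfl, rfl⟩ := h
      exact ⟨a, b, rfl, rfl, .inl (.single hab)⟩
    | tail _ h ih =>
      obtain ⟨a, b, rfl, hb, hpath⟩ := ih
      obtain ⟨b', c, hbc, hb', rfl⟩ := h
      refine ⟨a, c, rfl, rfl, ?_⟩
      rcases hπ b' b (hb'.trans hb.symm) with rfl | ⟨hPb', hPb⟩
      · exact hpath.imp (·.tail hbc)
          fun ⟨c, d, hc, hd, h₁, h₂⟩ => ⟨c, d, hc, hd, h₁, h₂.tail hbc⟩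
      · rcases hpath with hpath | ⟨c, d, -, hd, -, h₂⟩
        · exact .inr ⟨b, b', hPb, hPb', hpath.to_reflTransGen, .single hbc⟩
        · exact (hP d b hd hPb h₂).elim
  intro h
  obtain ⟨a, b, rfl, hab, hpath⟩ := lift h
  obtain rfl | ⟨hPa, hPb⟩ := hπ a b hab.symm <;>
    rcases hpath with hpath | ⟨c, d, hc, hd, h₁, h₂⟩
  · exact hq a hpath
  · exact hP d c hd hc (h₂.trans_left h₁)
  · exact hP a b hPa hPb hpath
  · exact hP d b hd hPb h₂



lemma List.Sublist.of_append_cons_of_notMem {l u v : List α} {y : α}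
    (h : l <+ u ++ y :: v) (hy : y ∉ l) : l <+ u ++ v := by
  obtain ⟨l₁, l₂, rfl, h₁, h₂⟩ := List.sublist_append_iff.1 h
  refine h₁.append ((List.sublist_cons_iff.1 h₂).resolve_right ?_)
  rintro ⟨r, rfl, -⟩
  exact hy (List.mem_append_right _ List.mem_cons_self)

lemma List.Sublist.swap_of_notMem {l u v : List α} {x y : α}
    (h : l <+ u ++ x :: y :: v) (hxy : x ∉ l ∨ y ∉ l) : l <+ u ++ y :: x :: v := by
  rcases hxy with hx | hy
  · exact (h.of_append_cons_of_notMem hx).trans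
      (((List.sublist_cons_self x v).cons_cons y).append_left u)
  · have h' : l <+ u ++ x :: v := by
      simpa using (show l <+ (u ++ [x]) ++ y :: v by simpa using h).of_append_cons_of_notMem hy
    exact h'.trans ((List.sublist_cons_self y (x :: v)).append_left u)

lemma List.Nodup.sublist_pair_or {w : List α} (hw : w.Nodup) {a b : α} (hab : a ≠ b)
    (ha : a ∈ w) (hb : b ∈ w) : [a, b] <+ w ∨ [b, a] <+ w := by
  induction w with
  | nil => simp at ha
  | cons c u ih =>
    obtain ⟨hcu, hu⟩ := List.nodup_cons.1 hw
    rcases List.mem_cons.1 ha with rfl | ha' <;> rcases List.mem_cons.1 hb with rfl | hb'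
    · exact absurd rfl hab
    · exact Or.inl (List.cons_sublist_cons.2 (List.singleton_sublist.2 hb'))
    · exact Or.inr (List.cons_sublist_cons.2 (List.singleton_sublist.2 ha'))
    · exact (ih hu ha' hb').imp (·.cons c) (·.cons c)

lemma List.Nodup.idxOf_lt_idxOf [DecidableEq α] {w : List α} (hw : w.Nodup) {a b : α}
    (h : [a, b] <+ w) : w.idxOf a < w.idxOf b := by
  induction w with
  | nil => simp at h
  | cons c u ih =>
    obtain ⟨hcu, hu⟩ := List.nodup_cons.1 hw
    rcases List.sublist_cons_iff.1 h with h | ⟨r, hr, hbu⟩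
    · have hne : ∀ x ∈ [a, b], c ≠ x := by rintro x hx rfl; exact hcu (h.subset hx)
      rw [List.idxOf_cons_ne _ (hne a (by simp)), List.idxOf_cons_ne _ (hne b (by simp))]
      exact Nat.succ_lt_succ (ih hu h)
    · obtain ⟨rfl, rfl⟩ := List.cons_eq_cons.1 hr
      have hb : b ∈ u := List.singleton_sublist.1 hbu
      rw [List.idxOf_cons_self, List.idxOf_cons_ne _ (by rintro rfl; exact hcu hb)]
      exact Nat.succ_pos _

end Relations

/-- An acyclic orientation of the induced subgraph `G[S]`, encoded as a relation on all of `V`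
whose arcs are edges of `G` between vertices of `S`. -/
structure IsAcyclicOrientation (G : SimpleGraph V) (S : Set V) (r : V → V → Prop) : Prop where
  adj_mem : ∀ ⦃a b⦄, r a b → G.Adj a b ∧ a ∈ S ∧ b ∈ S
  total : ∀ ⦃a b⦄, G.Adj a b → a ∈ S → b ∈ S → r a b ∨ r b a
  acyclic : ∀ a, ¬ TransGen r a a

def acyclicOrientations (G : SimpleGraph V) (S : Set V) : Set (V → V → Prop) :=
  {r | IsAcyclicOrientation G S r}

section Orientations
variable {G H : SimpleGraph V} {S : Set V} {r : V → V → Prop}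

namespace IsAcyclicOrientation

lemma asymm (hr : IsAcyclicOrientation G S r) {a b : V} (h : r a b) : ¬ r b a :=
  fun h' => hr.acyclic a (.head h (.single h'))

lemma of_adj_iff (hr : IsAcyclicOrientation G S r)
    (hGH : ∀ a ∈ S, ∀ b ∈ S, G.Adj a b ↔ H.Adj a b) : IsAcyclicOrientation H S r where
  adj_mem a b h := by
    obtain ⟨hab, ha, hb⟩ := hr.adj_mem h
    exact ⟨(hGH a ha b hb).1 hab, ha, hb⟩
  total a b hab ha hb := hr.total ((hGH a ha b hb).2 hab) ha hb
  acyclic := hr.acyclic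

lemma inf_adj (hr : IsAcyclicOrientation G S r) (hHG : H ≤ G) :
    IsAcyclicOrientation H S (fun a b => r a b ∧ H.Adj a b) where
  adj_mem _ _ h := ⟨h.2, (hr.adj_mem h.1).2⟩
  total _ _ hab ha hb := (hr.total (hHG hab) ha hb).imp (⟨·, hab⟩) (⟨·, hab.symm⟩)
  acyclic a h := hr.acyclic a (TransGen.mono (fun _ _ => And.left) a a h)

end IsAcyclicOrientation

lemma acyclicOrientations_congr (hGH : ∀ a ∈ S, ∀ b ∈ S, G.Adj a b ↔ H.Adj a b) :
    acyclicOrientations G S = acyclicOrientations H S :=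
  Set.ext fun _ => ⟨(·.of_adj_iff hGH), (·.of_adj_iff fun a ha b hb => (hGH a ha b hb).symm)⟩

lemma ncard_acyclicOrientations_comap {W : Type*} {f : W → V}
    (hf : Function.Injective f) (H : SimpleGraph V) (T : Set W) :
    (acyclicOrientations (H.comap f) T).ncard = (acyclicOrientations H (f '' T)).ncard := by
  refine Set.BijOn.ncard_eq (f := fun r => Relation.Map r f f)
    (Set.InvOn.bijOn (f' := fun r' a b => r' (f a) (f b)) ⟨?_, ?_⟩ ?_ ?_)
  · intro r hr
    funext a b
    exact propext
      ⟨fun ⟨a', b', h, ha, hb⟩ => hf ha ▸ hf hb ▸ h, fun h => ⟨a, b, h, rfl, rfl⟩⟩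
  · intro r' hr'
    funext x y
    refine propext ⟨fun ⟨a, b, h, ha, hb⟩ => ha ▸ hb ▸ h, fun h => ?_⟩
    obtain ⟨-, ⟨a, -, rfl⟩, ⟨b, -, rfl⟩⟩ := hr'.adj_mem h
    exact ⟨a, b, h, rfl, rfl⟩
  · intro r hr
    refine ⟨?_, ?_, Relation.not_transGen_map_self (P := fun _ => False)
      (fun a b h => .inl (hf h)) hr.acyclic (fun _ _ h => h.elim)⟩
    · rintro x y ⟨a, b, h, rfl, rfl⟩
      obtain ⟨hab, ha, hb⟩ := hr.adj_mem h
      exact ⟨hab, ⟨a, ha, rfl⟩, ⟨b, hb, rfl⟩⟩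
    · rintro x y hxy ⟨a, ha, rfl⟩ ⟨b, hb, rfl⟩
      exact (hr.total hxy ha hb).imp (⟨a, b, ·, rfl, rfl⟩) (⟨b, a, ·, rfl, rfl⟩)
  · intro r' hr'
    refine ⟨fun a b h => ?_, fun a b hab ha hb => hr'.total hab ⟨a, ha, rfl⟩ ⟨b, hb, rfl⟩,
      fun a h => hr'.acyclic (f a) (TransGen.lift f (fun _ _ => id) a a h)⟩
    obtain ⟨hab, ha, hb⟩ := hr'.adj_mem h
    exact ⟨hab, hf.mem_set_image.1 ha, hf.mem_set_image.1 hb⟩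

end Orientations

section Words

def wordOrientation (G : SimpleGraph V) (w : List V) (a b : V) : Prop :=
  G.Adj a b ∧ [a, b] <+ w

variable {G : SimpleGraph V}

lemma wordOrientation_swap {x y : V} {u v : List V} (hxy : ¬ G.Adj x y) {a b : V}
    (h : wordOrientation G (u ++ x :: y :: v) a b) :
    wordOrientation G (u ++ y :: x :: v) a b := by
  obtain ⟨hab, hsub⟩ := h
  by_cases hxy' : x = y
  · subst hxy'; exact ⟨hab, hsub⟩
  refine ⟨hab, hsub.swap_of_notMem ?_⟩
  by_contra! hmem
  simp only [List.mem_cons, List.not_mem_nil, or_false] at hmem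
  obtain ⟨rfl | rfl, rfl | rfl⟩ := hmem
  all_goals first | exact hxy' rfl | exact hxy hab | exact hxy hab.symm

lemma CommStep.perm_and_wordOrientation_eq {w w' : List V} (h : CommStep G w w') :
    w.Perm w' ∧ wordOrientation G w = wordOrientation G w' := by
  obtain ⟨x, y, u, v, hxy, rfl, rfl⟩ := h
  refine ⟨(List.Perm.swap y x v).append_left u, funext₂ fun a b => propext ?_⟩
  exact ⟨wordOrientation_swap hxy, wordOrientation_swap fun h => hxy h.symm⟩

lemma Relation.EqvGen.perm_and_wordOrientation_eq {w w' : List V}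
    (h : EqvGen (CommStep G) w w') :
    w.Perm w' ∧ wordOrientation G w = wordOrientation G w' := by
  induction h with
  | rel _ _ h => exact h.perm_and_wordOrientation_eq
  | refl => exact ⟨List.Perm.refl _, rfl⟩
  | symm _ _ _ ih => exact ⟨ih.1.symm, ih.2.symm⟩
  | trans _ _ _ _ _ ih₁ ih₂ => exact ⟨ih₁.1.trans ih₂.1, ih₁.2.trans ih₂.2⟩

lemma isAcyclicOrientation_wordOrientation [DecidableEq V] {w : List V} (hw : w.Nodup) :
    IsAcyclicOrientation G ↑w.toFinset (wordOrientation G w) where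
  adj_mem a b h :=
    ⟨h.1, by simpa using h.2.subset (by simp), by simpa using h.2.subset (by simp)⟩
  total a b hab ha hb := by
    simp only [Finset.mem_coe, List.mem_toFinset] at ha hb
    exact (hw.sublist_pair_or hab.ne ha hb).imp (⟨hab, ·⟩) (⟨hab.symm, ·⟩)
  acyclic a h := by
    have := TransGen.lift (p := (· < ·)) w.idxOf (fun a b h => hw.idxOf_lt_idxOf h.2) a a h
    rw [Function.onFun, transGen_eq_self] at this
    exact lt_irrefl _ this

/-- Topological sorting, via a linear extension of the reachability order of `r`. -/
lemma IsAcyclicOrientation.exists_wordOrientation_eq [DecidableEq V] {S : Finset V}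
    {r : V → V → Prop} (hr : IsAcyclicOrientation G ↑S r) :
    ∃ w : List V, w.Nodup ∧ w.toFinset = S ∧ wordOrientation G w = r := by
  classical
  have : IsPartialOrder V (ReflTransGen r) :=
    { refl := fun _ => ReflTransGen.refl
      trans := fun _ _ _ => ReflTransGen.trans
      antisymm := fun a b hab hba => (reflTransGen_iff_eq_or_transGen.1 hab).elim Eq.symm
        fun h => (hr.acyclic a (h.trans_left hba)).elim }
  obtain ⟨o, ho, hro⟩ := extend_partialOrder (ReflTransGen r)
  have hsorted : (S.sort o).Pairwise o := S.pairwise_sort o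
  have hmem : ∀ a, a ∈ S.sort o ↔ a ∈ (S : Set V) := fun a => Finset.mem_sort o
  have hnot : ∀ ⦃a b⦄, r a b → ¬ [b, a] <+ S.sort o := fun a b h hba =>
    (hr.adj_mem h).1.ne (ho.antisymm a b (hro a b (.single h))
      (List.pairwise_pair.1 (hsorted.sublist hba)))
  refine ⟨S.sort o, S.sort_nodup o, S.sort_toFinset o,
    funext₂ fun a b => propext ⟨?_, ?_⟩⟩
  · rintro ⟨hab, hsub⟩
    exact (hr.total hab ((hmem a).1 (hsub.subset (by simp)))
      ((hmem b).1 (hsub.subset (by simp)))).resolve_right fun h => hnot h hsub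
  · intro h
    obtain ⟨hab, ha, hb⟩ := hr.adj_mem h
    exact ⟨hab, ((S.sort_nodup o).sublist_pair_or hab.ne ((hmem a).2 ha)
      ((hmem b).2 hb)).resolve_right (hnot h)⟩

lemma Relation.EqvGen.commStep_cons (x : V) {u v : List V} (h : EqvGen (CommStep G) u v) :
    EqvGen (CommStep G) (x :: u) (x :: v) := by
  induction h with
  | rel _ _ h =>
    obtain ⟨c, d, p, q, hcd, rfl, rfl⟩ := h
    exact .rel _ _ ⟨c, d, x :: p, q, hcd, rfl, rfl⟩
  | refl => exact .refl _
  | symm _ _ _ ih => exact ih.symm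
  | trans _ _ _ _ _ ih₁ ih₂ => exact ih₁.trans _ _ _ ih₂

lemma eqvGen_commStep_append_cons {a : V} {p : List V} (hp : ∀ x ∈ p, ¬ G.Adj x a)
    (q : List V) : EqvGen (CommStep G) (p ++ a :: q) (a :: (p ++ q)) := by
  induction p with
  | nil => exact .refl _
  | cons x p ih =>
    refine (EqvGen.commStep_cons x (ih fun y hy => hp y (.tail x hy))).trans _ _ _ (.rel _ _ ?_)
    exact ⟨x, a, [], p ++ q, hp x List.mem_cons_self, rfl, rfl⟩

lemma wordOrientation_iff_cons {a : V} {u : List V} (ha : a ∉ u) (c d : V) :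
    wordOrientation G u c d ↔ wordOrientation G (a :: u) c d ∧ c ≠ a := by
  refine ⟨fun h => ⟨⟨h.1, h.2.cons a⟩, by rintro rfl; exact ha (h.2.subset (by simp))⟩,
    fun ⟨⟨hcd, hsub⟩, hca⟩ => ⟨hcd, ?_⟩⟩
  exact (List.sublist_cons_iff.1 hsub).resolve_right
    fun ⟨_, hr, _⟩ => hca (List.cons_eq_cons.1 hr).1

/-- Bubble the first letter of `w` to the front of `w'`: the letters it passes are not adjacent
to it, because `w` and `w'` orient those edges alike. -/
lemma eqvGen_commStep_of_wordOrientation_eq {w w' : List V} (hw : w.Nodup) (hperm : w.Perm w')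
    (h : wordOrientation G w = wordOrientation G w') : EqvGen (CommStep G) w w' := by
  classical
  induction w generalizing w' with
  | nil => rw [List.nil_perm.1 hperm]; exact .refl _
  | cons a u ih =>
    obtain ⟨hau, hu⟩ := List.nodup_cons.1 hw
    obtain ⟨p, q, rfl⟩ := List.append_of_mem (hperm.subset List.mem_cons_self)
    have hw' : (a :: (p ++ q)).Nodup := (hperm.trans List.perm_middle).nodup_iff.1 hw
    have hp : ∀ x ∈ p, ¬ G.Adj x a := by
      intro x hx hxa
      have hxu : x ∈ u := by
        have := hperm.symm.subset (List.mem_append_left _ hx)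
        exact (List.mem_cons.1 this).resolve_left
          (by rintro rfl; exact (List.nodup_cons.1 hw').1 (List.mem_append_left _ hx))
      have hax : wordOrientation G (p ++ a :: q) a x :=
        h ▸ ⟨hxa.symm, List.cons_sublist_cons.2 (List.singleton_sublist.2 hxu)⟩
      have hxa' : [x, a] <+ p ++ a :: q := (List.singleton_sublist.2 hx).append
        (List.singleton_sublist.2 List.mem_cons_self)
      have hnd := (hperm.nodup_iff.1 hw)
      exact lt_asymm (hnd.idxOf_lt_idxOf hax.2) (hnd.idxOf_lt_idxOf hxa')
    have hbubble := eqvGen_commStep_append_cons hp q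
    have htail : wordOrientation G u = wordOrientation G (p ++ q) := by
      have := h.trans hbubble.perm_and_wordOrientation_eq.2
      funext c d
      rw [wordOrientation_iff_cons hau, wordOrientation_iff_cons (List.nodup_cons.1 hw').1, this]
    exact (EqvGen.commStep_cons a (ih hu (hperm.trans List.perm_middle).cons_inv htail)).trans
      _ _ _ (hbubble.symm _ _)

lemma bWords_eq_sum [Fintype V] (G : SimpleGraph V) (k : ℕ) :
    bWords G k = ∑ S : Finset V with S.card = k, (acyclicOrientations G S).ncard := by
  classical
  let f : {w : List V // w.Nodup ∧ w.length = k} → Finset V × (V → V → Prop) :=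
    fun w => (w.1.toFinset, wordOrientation G w.1)
  have hker : ∀ w w', (commSetoid G).comap Subtype.val w w' ↔ f w = f w' := fun w w' => by
    refine ⟨fun h => ?_, fun h => ?_⟩
    · obtain ⟨hperm, hori⟩ := EqvGen.perm_and_wordOrientation_eq h
      exact Prod.ext (List.toFinset_eq_of_perm _ _ hperm) hori
    · exact eqvGen_commStep_of_wordOrientation_eq w.2.1
        (List.perm_of_nodup_nodup_toFinset_eq w.2.1 w'.2.1 (congrArg Prod.fst h))
        (congrArg Prod.snd h)
  have hrange : Set.range f = {p | p.1.card = k ∧ IsAcyclicOrientation G p.1 p.2} := by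
    ext ⟨S, r⟩
    refine ⟨?_, fun ⟨hk, hr⟩ => ?_⟩
    · rintro ⟨w, hw⟩
      cases hw
      exact ⟨(List.toFinset_card_of_nodup w.2.1).trans w.2.2,
        isAcyclicOrientation_wordOrientation w.2.1⟩
    · obtain ⟨w, hw, rfl, rfl⟩ := hr.exists_wordOrientation_eq
      exact ⟨⟨w, hw, (List.toFinset_card_of_nodup hw).symm.trans hk⟩, rfl⟩
  calc bWords G k = Nat.card (Set.range f) :=
        Nat.card_congr ((Quotient.congrRight hker).trans (Setoid.quotientKerEquivRange f))
    _ = ∑ S : Finset V, Nat.card {r // S.card = k ∧ IsAcyclicOrientation G S r} := by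
        rw [hrange, ← Nat.card_sigma]
        exact Nat.card_congr (Equiv.subtypeProdEquivSigmaSubtype
          fun (S : Finset V) r => S.card = k ∧ IsAcyclicOrientation G S r)
    _ = _ := by
        rw [Finset.sum_filter]
        refine Finset.sum_congr rfl fun S _ => ?_
        split_ifs with hS
        · simp only [hS, true_and]
          exact Nat.card_coe_set_eq _
        · simp [hS]

lemma booleanNumber_eq_sum [Fintype V] (G : SimpleGraph V) :
    booleanNumber G = (-1) ^ Fintype.card V *
      ∑ S : Finset V, (-1) ^ S.card * ((acyclicOrientations G S).ncard : ℤ) := by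
  rw [booleanNumber]
  congr 1
  rw [← Finset.sum_fiberwise_of_maps_to (g := Finset.card)
    (t := Finset.range (Fintype.card V + 1))
    fun S _ => Finset.mem_range.2 (Nat.lt_succ_of_le S.card_le_univ)]
  refine Finset.sum_congr rfl fun k _ => ?_
  rw [bWords_eq_sum, Nat.cast_sum, Finset.mul_sum]
  exact Finset.sum_congr rfl fun S hS => by rw [(Finset.mem_filter.1 hS).2]

end Words

section EdgeRecursion
variable {G : SimpleGraph V} {s t : V} {S : Set V} {q : V → V → Prop}

lemma deleteEdges_adj_iff {a b : V} : (G.deleteEdges {s(s, t)}).Adj a b ↔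
    G.Adj a b ∧ ¬ (a = s ∧ b = t ∨ a = t ∧ b = s) := by
  simp

lemma acyclicOrientations_deleteEdges_of_notMem (h : ¬ (s ∈ S ∧ t ∈ S)) :
    acyclicOrientations (G.deleteEdges {s(s, t)}) S = acyclicOrientations G S :=
  acyclicOrientations_congr fun a ha b hb => by
    rw [deleteEdges_adj_iff, and_iff_left_iff_imp]
    rintro - (⟨rfl, rfl⟩ | ⟨rfl, rfl⟩)
    exacts [h ⟨ha, hb⟩, h ⟨hb, ha⟩]

lemma IsAcyclicOrientation.addArc (hq : IsAcyclicOrientation (G.deleteEdges {s(s, t)}) S q)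
    (he : G.Adj s t) (hs : s ∈ S) (ht : t ∈ S) (hts : ¬ TransGen q t s) :
    IsAcyclicOrientation G S (fun a b => q a b ∨ a = s ∧ b = t) where
  adj_mem a b := by
    rintro (h | ⟨rfl, rfl⟩)
    · obtain ⟨hab, ha, hb⟩ := hq.adj_mem h
      exact ⟨(deleteEdges_adj_iff.1 hab).1, ha, hb⟩
    · exact ⟨he, hs, ht⟩
  total a b hab ha hb := by
    by_cases hst : a = s ∧ b = t ∨ a = t ∧ b = s
    · rcases hst with ⟨rfl, rfl⟩ | ⟨rfl, rfl⟩
      exacts [.inl (.inr ⟨rfl, rfl⟩), .inr (.inr ⟨rfl, rfl⟩)]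
    · exact (hq.total (deleteEdges_adj_iff.2 ⟨hab, hst⟩) ha hb).imp .inl .inl
  acyclic a h := by
    rcases h.or_arc with h | ⟨h₁, h₂⟩
    · exact hq.acyclic a h
    · rcases reflTransGen_iff_eq_or_transGen.1 (h₂.trans h₁) with h | h
      exacts [he.ne h, hts h]

lemma ncard_acyclicOrientations_with_arc (he : G.Adj s t) (hs : s ∈ S) (ht : t ∈ S) :
    {r | IsAcyclicOrientation G S r ∧ r s t}.ncard =
      {q | IsAcyclicOrientation (G.deleteEdges {s(s, t)}) S q ∧ ¬ TransGen q t s}.ncard := by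
  refine Set.BijOn.ncard_eq (f := fun r a b => r a b ∧ (G.deleteEdges {s(s, t)}).Adj a b)
    (Set.InvOn.bijOn (f' := fun q a b => q a b ∨ a = s ∧ b = t) ⟨?_, ?_⟩ ?_ ?_)
  · rintro r ⟨hr, hst⟩
    funext a b
    refine propext ⟨?_, fun h => ?_⟩
    · rintro (⟨h, -⟩ | ⟨rfl, rfl⟩)
      exacts [h, hst]
    · by_cases hab : a = s ∧ b = t ∨ a = t ∧ b = s
      · rcases hab with ⟨rfl, rfl⟩ | ⟨rfl, rfl⟩
        exacts [.inr ⟨rfl, rfl⟩, (hr.asymm hst h).elim]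
      · exact .inl ⟨h, deleteEdges_adj_iff.2 ⟨(hr.adj_mem h).1, hab⟩⟩
  · rintro q ⟨hq, -⟩
    funext a b
    refine propext ⟨?_, fun h => ⟨.inl h, (hq.adj_mem h).1⟩⟩
    rintro ⟨h | ⟨rfl, rfl⟩, hab⟩
    exacts [h, ((deleteEdges_adj_iff.1 hab).2 (.inl ⟨rfl, rfl⟩)).elim]
  · rintro r ⟨hr, hst⟩
    exact ⟨hr.inf_adj (G.deleteEdges_le _),
      fun h => hr.acyclic s (.head hst (TransGen.mono (fun _ _ => And.left) _ _ h))⟩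
  · rintro q ⟨hq, hts⟩
    exact ⟨hq.addArc he hs ht hts, .inr ⟨rfl, rfl⟩⟩

lemma ncard_acyclicOrientations_eq_add_of_adj [Finite V] (he : G.Adj s t) (hs : s ∈ S)
    (ht : t ∈ S) :
    (acyclicOrientations G S).ncard = {r | IsAcyclicOrientation G S r ∧ r s t}.ncard +
      {r | IsAcyclicOrientation G S r ∧ r t s}.ncard := by
  have hdisj : Disjoint {r | IsAcyclicOrientation G S r ∧ r s t}
      {r | IsAcyclicOrientation G S r ∧ r t s} :=
    Set.disjoint_left.2 fun r ⟨hr, h⟩ ⟨_, h'⟩ => hr.asymm h h'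
  rw [← Set.ncard_union_eq hdisj]
  congr 1
  ext r
  exact ⟨fun hr => (hr.total he hs ht).imp (⟨hr, ·⟩) (⟨hr, ·⟩),
    by rintro (⟨hr, -⟩ | ⟨hr, -⟩) <;> exact hr⟩

variable [DecidableEq V]

def contractEdgeMap (s t a : V) : Option {v : V // v ≠ s ∧ v ≠ t} :=
  if h : a ≠ s ∧ a ≠ t then some ⟨a, h⟩ else none

@[simp] lemma contractEdgeMap_left : contractEdgeMap s t s = none := by simp [contractEdgeMap]

@[simp] lemma contractEdgeMap_right : contractEdgeMap s t t = none := by simp [contractEdgeMap]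

@[simp] lemma contractEdgeMap_coe (u : {v : V // v ≠ s ∧ v ≠ t}) :
    contractEdgeMap s t u = some u := by
  simp [contractEdgeMap, u.2]

lemma eq_or_of_contractEdgeMap_eq {a b : V} (h : contractEdgeMap s t a = contractEdgeMap s t b) :
    a = b ∨ (a = s ∨ a = t) ∧ (b = s ∨ b = t) := by
  unfold contractEdgeMap at h
  split_ifs at h with ha hb hb <;> simp_all; tauto

lemma mem_of_contractEdgeMap_eq (hs : s ∈ S) (ht : t ∈ S) {a b : V} (hb : b ∈ S)
    (h : contractEdgeMap s t b = contractEdgeMap s t a) : a ∈ S := by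
  rcases eq_or_of_contractEdgeMap_eq h with rfl | ⟨-, rfl | rfl⟩ <;> assumption

lemma contractEdge_adj_contractEdgeMap {a b : V} (h : (G.deleteEdges {s(s, t)}).Adj a b) :
    (contractEdge G s t).Adj (contractEdgeMap s t a) (contractEdgeMap s t b) := by
  obtain ⟨hab, hst⟩ := deleteEdges_adj_iff.1 h
  unfold contractEdgeMap
  split_ifs with ha hb hb
  · exact hab
  · obtain rfl | rfl : b = s ∨ b = t := by tauto
    exacts [.inl hab, .inr hab]
  · obtain rfl | rfl : a = s ∨ a = t := by tauto
    exacts [.inl hab.symm, .inr hab.symm]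
  · have := hab.ne
    exact hst (by grind)

lemma exists_deleteEdges_adj_of_contractEdge_adj {x y : Option {v : V // v ≠ s ∧ v ≠ t}}
    (h : (contractEdge G s t).Adj x y) : ∃ a b, (G.deleteEdges {s(s, t)}).Adj a b ∧
      contractEdgeMap s t a = x ∧ contractEdgeMap s t b = y := by
  rcases x with _ | ⟨u, hu⟩ <;> rcases y with _ | ⟨v, hv⟩
  · exact h.elim
  · rcases h with h | h
    · exact ⟨s, v, deleteEdges_adj_iff.2 ⟨h.symm, by tauto⟩, by simp,
        contractEdgeMap_coe ⟨v, hv⟩⟩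
    · exact ⟨t, v, deleteEdges_adj_iff.2 ⟨h.symm, by tauto⟩, by simp,
        contractEdgeMap_coe ⟨v, hv⟩⟩
  · rcases h with h | h
    · exact ⟨u, s, deleteEdges_adj_iff.2 ⟨h, by tauto⟩, contractEdgeMap_coe ⟨u, hu⟩,
        by simp⟩
    · exact ⟨u, t, deleteEdges_adj_iff.2 ⟨h, by tauto⟩, contractEdgeMap_coe ⟨u, hu⟩,
        by simp⟩
  · exact ⟨u, v, deleteEdges_adj_iff.2 ⟨h, by tauto⟩, contractEdgeMap_coe ⟨u, hu⟩,
      contractEdgeMap_coe ⟨v, hv⟩⟩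

lemma card_image_contractEdgeMap (hst : s ≠ t) {S : Finset V} (hs : s ∈ S) (ht : t ∈ S) :
    (S.image (contractEdgeMap s t)).card + 1 = S.card := by
  have himage : S.image (contractEdgeMap s t) = (S.erase t).image (contractEdgeMap s t) := by
    conv_lhs => rw [← Finset.insert_erase ht]
    rw [Finset.image_insert, contractEdgeMap_right, Finset.insert_eq_of_mem]
    exact Finset.mem_image.2 ⟨s, Finset.mem_erase.2 ⟨hst, hs⟩, contractEdgeMap_left⟩
  rw [himage, Finset.card_image_of_injOn, Finset.card_erase_add_one ht]
  intro a ha b hb hab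
  rcases eq_or_of_contractEdgeMap_eq hab with h | ⟨ha' | ha', hb' | hb'⟩
  · exact h
  · exact ha'.trans hb'.symm
  all_goals simp_all

lemma IsAcyclicOrientation.map_contractEdgeMap
    (hq : IsAcyclicOrientation (G.deleteEdges {s(s, t)}) S q) (hs : s ∈ S) (ht : t ∈ S)
    (hst : ¬ TransGen q s t) (hts : ¬ TransGen q t s) :
    IsAcyclicOrientation (contractEdge G s t) (contractEdgeMap s t '' S)
      (Relation.Map q (contractEdgeMap s t) (contractEdgeMap s t)) where
  adj_mem := by
    rintro _ _ ⟨a, b, h, rfl, rfl⟩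
    obtain ⟨hab, ha, hb⟩ := hq.adj_mem h
    exact ⟨contractEdge_adj_contractEdgeMap hab, ⟨a, ha, rfl⟩, ⟨b, hb, rfl⟩⟩
  total x y hxy := by
    obtain ⟨a, b, hab, rfl, rfl⟩ := exists_deleteEdges_adj_of_contractEdge_adj hxy
    rintro ⟨a', ha', ha⟩ ⟨b', hb', hb⟩
    exact (hq.total hab (mem_of_contractEdgeMap_eq hs ht ha' ha)
      (mem_of_contractEdgeMap_eq hs ht hb' hb)).imp
      (⟨a, b, ·, rfl, rfl⟩) (⟨b, a, ·, rfl, rfl⟩)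
  acyclic := Relation.not_transGen_map_self (P := fun a => a = s ∨ a = t)
    (fun _ _ => eq_or_of_contractEdgeMap_eq) hq.acyclic
    (by rintro a b (rfl | rfl) (rfl | rfl) <;> first | exact hq.acyclic _ | assumption)

lemma IsAcyclicOrientation.comap_contractEdgeMap {r : _ → _ → Prop}
    (hr : IsAcyclicOrientation (contractEdge G s t) (contractEdgeMap s t '' S) r)
    (hs : s ∈ S) (ht : t ∈ S) : IsAcyclicOrientation (G.deleteEdges {s(s, t)}) S
      (fun a b => (G.deleteEdges {s(s, t)}).Adj a b ∧
        r (contractEdgeMap s t a) (contractEdgeMap s t b)) where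
  adj_mem a b h := by
    obtain ⟨-, ⟨a', ha', ha⟩, ⟨b', hb', hb⟩⟩ := hr.adj_mem h.2
    exact ⟨h.1, mem_of_contractEdgeMap_eq hs ht ha' ha, mem_of_contractEdgeMap_eq hs ht hb' hb⟩
  total a b hab ha hb :=
    (hr.total (contractEdge_adj_contractEdgeMap hab) ⟨a, ha, rfl⟩ ⟨b, hb, rfl⟩).imp
      (⟨hab, ·⟩) (⟨hab.symm, ·⟩)
  acyclic a h := hr.acyclic _ (TransGen.lift _ (fun _ _ (h : _ ∧ _) => h.2) a a h)

lemma ncard_acyclicOrientations_contractEdge (hs : s ∈ S) (ht : t ∈ S) :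
    {q | IsAcyclicOrientation (G.deleteEdges {s(s, t)}) S q ∧ ¬ TransGen q t s ∧
      ¬ TransGen q s t}.ncard =
      (acyclicOrientations (contractEdge G s t) (contractEdgeMap s t '' S)).ncard := by
  refine Set.BijOn.ncard_eq
    (f := fun q => Relation.Map q (contractEdgeMap s t) (contractEdgeMap s t))
    (Set.InvOn.bijOn (f' := fun r a b => (G.deleteEdges {s(s, t)}).Adj a b ∧
      r (contractEdgeMap s t a) (contractEdgeMap s t b)) ⟨?_, ?_⟩ ?_ ?_)
  · rintro q ⟨hq, hts, hst⟩
    have hmap := hq.map_contractEdgeMap hs ht hst hts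
    funext a b
    refine propext ⟨fun ⟨hab, h⟩ => ?_, fun h => ⟨(hq.adj_mem h).1, a, b, h, rfl, rfl⟩⟩
    obtain ⟨-, ⟨a', ha', ha⟩, ⟨b', hb', hb⟩⟩ := hmap.adj_mem h
    refine (hq.total hab (mem_of_contractEdgeMap_eq hs ht ha' ha)
      (mem_of_contractEdgeMap_eq hs ht hb' hb)).resolve_right fun hba => ?_
    exact hmap.acyclic _ (.head h (.single ⟨b, a, hba, rfl, rfl⟩))
  · intro r hr
    funext x y
    refine propext ⟨fun ⟨a, b, ⟨_, h⟩, ha, hb⟩ => ha ▸ hb ▸ h, fun h => ?_⟩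
    obtain ⟨a, b, hab, rfl, rfl⟩ := exists_deleteEdges_adj_of_contractEdge_adj (hr.adj_mem h).1
    exact ⟨a, b, ⟨hab, h⟩, rfl, rfl⟩
  · rintro q ⟨hq, hts, hst⟩
    exact hq.map_contractEdgeMap hs ht hst hts
  · intro r hr
    refine ⟨hr.comap_contractEdgeMap hs ht, fun h => ?_, fun h => ?_⟩
    all_goals exact hr.acyclic none (by
      simpa [Function.onFun] using TransGen.lift _ (fun _ _ (h : _ ∧ _) => h.2) _ _ h)

theorem ncard_acyclicOrientations_eq_deleteEdges_add_contractEdge [Finite V] (he : G.Adj s t)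
    (hs : s ∈ S) (ht : t ∈ S) : (acyclicOrientations G S).ncard =
      (acyclicOrientations (G.deleteEdges {s(s, t)}) S).ncard +
      (acyclicOrientations (contractEdge G s t) (contractEdgeMap s t '' S)).ncard := by
  have hts := ncard_acyclicOrientations_with_arc he hs ht
  have hst := ncard_acyclicOrientations_with_arc he.symm ht hs
  rw [Sym2.eq_swap] at hst
  rw [ncard_acyclicOrientations_eq_add_of_adj he hs ht, hts, hst,
    ← Set.ncard_union_add_ncard_inter, ← ncard_acyclicOrientations_contractEdge hs ht]
  congr 2
  · ext q
    refine ⟨by rintro (⟨hq, -⟩ | ⟨hq, -⟩) <;> exact hq, fun hq => ?_⟩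
    by_cases hts : TransGen q t s
    · exact .inr ⟨hq, fun hst => hq.acyclic s (hst.trans hts)⟩
    · exact .inl ⟨hq, hts⟩
  · ext q
    exact ⟨fun ⟨⟨hq, h₁⟩, _, h₂⟩ => ⟨hq, h₁, h₂⟩,
      fun ⟨hq, h₁, h₂⟩ => ⟨⟨hq, h₁⟩, hq, h₂⟩⟩

end EdgeRecursion

section Sums
variable {M : Type*} [AddCommMonoid M]

lemma Finset.sum_option_eq_sum_filter_add_sum_map {W : Type*} [Fintype W] [DecidableEq W]
    (f : Finset (Option W) → M) :
    ∑ T, f T = ∑ T with none ∈ T, f T + ∑ T₀ : Finset W, f (T₀.map .some) := by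
  rw [← Finset.sum_filter_add_sum_filter_not _ (none ∈ ·)]
  congr 1
  have hmap : ∀ T ∈ (Finset.univ : Finset (Finset (Option W))).filter (none ∉ ·),
      (Finset.eraseNone T).map .some = T :=
    fun T hT => by
      rw [Finset.map_some_eraseNone, Finset.erase_eq_of_notMem (Finset.mem_filter.1 hT).2]
  exact Finset.sum_nbij' Finset.eraseNone (·.map .some) (by simp) (by simp) hmap (by simp)
    fun T hT => by rw [hmap T hT]

variable [Fintype V] [DecidableEq V] {G : SimpleGraph V} {s t : V}

lemma Fintype.card_subtype_ne_and_ne (hst : s ≠ t) :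
    Fintype.card {v : V // v ≠ s ∧ v ≠ t} + 2 = Fintype.card V := by
  have : Finset.univ.filter (fun v : V => v ≠ s ∧ v ≠ t) = (Finset.univ.erase s).erase t := by
    ext
    simp [and_comm]
  have h₁ := Finset.card_erase_add_one (s := Finset.univ.erase s) (by simpa using hst.symm)
  have h₂ := Finset.card_erase_add_one (Finset.mem_univ s)
  rw [Fintype.card_subtype, this, ← Finset.card_univ]
  omega

lemma sum_filter_image_contractEdgeMap (f : Finset (Option {v : V // v ≠ s ∧ v ≠ t}) → M) :
    ∑ S : Finset V with s ∈ S ∧ t ∈ S, f (S.image (contractEdgeMap s t)) =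
      ∑ T with none ∈ T, f T := by
  refine Finset.sum_nbij' (·.image (contractEdgeMap s t))
    (fun T => Finset.univ.filter (contractEdgeMap s t · ∈ T)) ?_ (by simp_all) ?_ ?_
    (fun _ _ => rfl)
  · intro S hS
    simp only [Finset.mem_filter, Finset.mem_univ, true_and] at hS ⊢
    exact Finset.mem_image.2 ⟨s, hS.1, contractEdgeMap_left⟩
  · intro S hS
    simp only [Finset.mem_filter, Finset.mem_univ, true_and] at hS
    ext a
    simp only [Finset.mem_filter, Finset.mem_univ, true_and, Finset.mem_image]
    exact ⟨fun ⟨b, hb, h⟩ => mem_of_contractEdgeMap_eq (S := ↑S) hS.1 hS.2 hb h,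
      fun ha => ⟨a, ha, rfl⟩⟩
  · intro T _
    ext x
    simp only [Finset.mem_image, Finset.mem_filter, Finset.mem_univ, true_and]
    refine ⟨fun ⟨a, ha, h⟩ => h ▸ ha, fun hx => ?_⟩
    rcases x with _ | u
    exacts [⟨s, by simpa using hx, contractEdgeMap_left⟩, ⟨u, by simpa using hx, by simp⟩]

lemma sum_acyclicOrientations_eq_deleteEdges_sub_contractEdge (he : G.Adj s t) :
    ∑ S : Finset V, (-1) ^ S.card * ((acyclicOrientations G S).ncard : ℤ) =
      ∑ S : Finset V, (-1) ^ S.card *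
        ((acyclicOrientations (G.deleteEdges {s(s, t)}) S).ncard : ℤ) -
      ∑ T : Finset (Option {v : V // v ≠ s ∧ v ≠ t}) with none ∈ T,
        (-1) ^ T.card * ((acyclicOrientations (contractEdge G s t) T).ncard : ℤ) := by
  rw [← sum_filter_image_contractEdgeMap, Finset.sum_filter, ← Finset.sum_sub_distrib]
  refine Finset.sum_congr rfl fun S _ => ?_
  split_ifs with h
  · rw [ncard_acyclicOrientations_eq_deleteEdges_add_contractEdge he h.1 h.2,
      ← card_image_contractEdgeMap he.ne h.1 h.2, Finset.coe_image]
    push_cast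
    ring
  · rw [acyclicOrientations_deleteEdges_of_notMem h, sub_zero]

end Sums

end

/-- **Edge recursion for the boolean number.**  For any edge `e = {s,t}` of a finite simple
graph `G`, one has `β(G) = β(G − e) + β(G/e) + β(G − [e])`, where `G − e` is the deletion,
`G/e` the simple contraction, and `G − [e]` the extraction (the induced subgraph on the
complement of `{s,t}`). -/
theorem booleanNumber_edge_recursion {V : Type*} [Fintype V] [DecidableEq V]
    (G : SimpleGraph V) (s t : V) (he : G.Adj s t) :
    booleanNumber G =
      booleanNumber (G.deleteEdges {s(s, t)}) +
      booleanNumber (contractEdge G s t) +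
      booleanNumber (G.comap (fun v : {v : V // v ≠ s ∧ v ≠ t} => (v : V))) := by
  have hextract : (contractEdge G s t).comap some =
      G.comap (fun v : {v : V // v ≠ s ∧ v ≠ t} => (v : V)) := rfl
  have hcomap (T₀ : Finset {v : V // v ≠ s ∧ v ≠ t}) :
      (acyclicOrientations (contractEdge G s t) (T₀.map .some)).ncard =
        (acyclicOrientations ((contractEdge G s t).comap some) T₀).ncard := by
    rw [Finset.coe_map]
    exact (ncard_acyclicOrientations_comap (Option.some_injective _) _ _).symm
  rw [booleanNumber_eq_sum, booleanNumber_eq_sum, booleanNumber_eq_sum, booleanNumber_eq_sum,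
    sum_acyclicOrientations_eq_deleteEdges_sub_contractEdge he,
    Finset.sum_option_eq_sum_filter_add_sum_map]
  simp only [Finset.card_map, hcomap, hextract, Fintype.card_option,
    ← Fintype.card_subtype_ne_and_ne he.ne]
  ring
end

section
/- Let G be a finite simple graph and let σ ∈ 𝔅(G) be the commutation-equivalence class of an injective word of length k. Then the lower order ideal {τ ∈ 𝔅(G) : τ ≤ σ} is order-isomorphic to the lattice of all subsets of a k-element set; in particular 𝔅(G) is a simplicial poset. -/
/-- The setoid of injective words (lists of pairwise distinct vertices) on `G`,
up to commutation equivalence. -/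
def wordSetoid {V : Type*} (G : SimpleGraph V) : Setoid {w : List V // w.Nodup} :=
  Setoid.comap Subtype.val (commSetoid G)

/-- The boolean ideal of `G`: commutation classes of injective words on `G`. -/
def BIdeal {V : Type*} (G : SimpleGraph V) := Quotient (wordSetoid G)

/-- The commutation class of an injective word. -/
def mkClass {V : Type*} (G : SimpleGraph V) (w : {w : List V // w.Nodup}) : BIdeal G :=
  Quotient.mk (wordSetoid G) w

/-- The subword order on the boolean ideal: `σ ≤ τ` iff some representative of `σ`
is a subsequence of some representative of `τ`. -/
def bLE {V : Type*} (G : SimpleGraph V) (σ τ : BIdeal G) : Prop :=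
  ∃ a b : {w : List V // w.Nodup}, mkClass G a = σ ∧ mkClass G b = τ ∧ a.1.Sublist b.1

/-!
A commutation move permutes a word and survives deleting letters: after filtering, it is either
still a commutation move or trivial. So if `τ = [a]` with `a` a subword of some `b ≡ w`, then
filtering `w` to the letters of `a` gives a word equivalent to the same filtering of `b`, which
is `a` itself. Every `τ ≤ [w]` is therefore the class of the subword of `w` on its own letter
set, and `τ ↦ letters τ` identifies the lower ideal of `[w]` with the subsets of the `k` letters
of `w`, ordered by inclusion.
-/

section

open Relation

variable {V : Type*} {G : SimpleGraph V}

theorem CommStep.perm {u v : List V} (h : CommStep G u v) : u.Perm v := by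
  obtain ⟨a, b, pre, suf, -, rfl, rfl⟩ := h
  exact (List.Perm.swap b a suf).append_left pre

theorem CommStep.filter (p : V → Bool) {u v : List V} (h : CommStep G u v) :
    u.filter p = v.filter p ∨ CommStep G (u.filter p) (v.filter p) := by
  obtain ⟨a, b, pre, suf, hab, rfl, rfl⟩ := h
  cases ha : p a <;> cases hb : p b
  case true.true =>
    exact .inr ⟨a, b, pre.filter p, suf.filter p, hab, by simp [ha, hb], by simp [ha, hb]⟩
  all_goals exact .inl (by simp [ha, hb])

theorem perm_of_eqvGen_commStep {u v : List V} (h : EqvGen (CommStep G) u v) : u.Perm v :=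
  (List.isSetoid V).iseqv.eqvGen_iff.1 (h.mono fun _ _ => CommStep.perm)

theorem eqvGen_commStep_filter (p : V → Bool) {u v : List V} (h : EqvGen (CommStep G) u v) :
    EqvGen (CommStep G) (u.filter p) (v.filter p) := by
  induction h with
  | rel _ _ h => exact (h.filter p).elim (fun h => h ▸ .refl _) (.rel _ _)
  | refl => exact .refl _
  | symm _ _ _ ih => exact ih.symm
  | trans _ _ _ _ _ ih₁ ih₂ => exact ih₁.trans _ _ _ ih₂

theorem List.Sublist.filter_mem_eq_of_nodup {α : Type*} [DecidableEq α] {l₁ l₂ : List α}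
    (h : l₁.Sublist l₂) (hl₂ : l₂.Nodup) : l₂.filter (· ∈ l₁) = l₁ := by
  refine (hl₂.perm_iff_eq_of_sublist List.filter_sublist h).1 ?_
  refine (List.perm_ext_iff_of_nodup (hl₂.filter _) (hl₂.sublist h)).2 fun x => ?_
  simpa using fun hx => h.subset hx

theorem Equiv.finsetSubtypeComm_symm_subset_iff {α : Type*} {p : α → Prop}
    {S T : {s : Finset α // ∀ a ∈ s, p a}} :
    (Equiv.finsetSubtypeComm p).symm S ⊆ (Equiv.finsetSubtypeComm p).symm T ↔ S.1 ⊆ T.1 := by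
  conv_rhs => rw [← (Equiv.finsetSubtypeComm p).apply_symm_apply S,
    ← (Equiv.finsetSubtypeComm p).apply_symm_apply T]
  simp [Finset.map_subset_map]

namespace BIdeal

variable [DecidableEq V]

def letters : BIdeal G → Finset V :=
  Quotient.lift (fun u => u.1.toFinset)
    fun _ _ h => List.toFinset_eq_of_perm _ _ (perm_of_eqvGen_commStep h)

@[simp]
theorem letters_mkClass (u : {w : List V // w.Nodup}) : (mkClass G u).letters = u.1.toFinset :=
  rfl

theorem letters_mono {σ τ : BIdeal G} (h : bLE G σ τ) : σ.letters ⊆ τ.letters := by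
  obtain ⟨a, b, rfl, rfl, hab⟩ := h
  intro x
  simpa using fun hx => hab.subset hx

variable (G) in
def restrict (w : {w : List V // w.Nodup}) (S : Finset V) : BIdeal G :=
  mkClass G ⟨w.1.filter (· ∈ S), w.2.filter _⟩

variable {w : {w : List V // w.Nodup}}

theorem restrict_bLE (S : Finset V) : bLE G (restrict G w S) (mkClass G w) :=
  ⟨_, w, rfl, rfl, List.filter_sublist⟩

theorem restrict_mono {S T : Finset V} (hST : S ⊆ T) : bLE G (restrict G w S) (restrict G w T) :=
  ⟨_, _, rfl, rfl, List.monotone_filter_right _ fun x => by simpa using @hST x⟩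

theorem letters_restrict {S : Finset V} (hS : ∀ x ∈ S, x ∈ w.1) :
    (restrict G w S).letters = S := by
  ext x
  simpa [restrict] using fun hx => hS x hx

theorem restrict_letters {τ : BIdeal G} (hτ : bLE G τ (mkClass G w)) :
    restrict G w τ.letters = τ := by
  obtain ⟨a, b, rfl, hb, hab⟩ := hτ
  have hfilter := eqvGen_commStep_filter (· ∈ a.1) (Quotient.exact hb).symm
  rw [hab.filter_mem_eq_of_nodup b.2] at hfilter
  exact Quotient.sound (show EqvGen (CommStep G) _ a.1 by simpa [restrict] using hfilter)

theorem bLE_iff_letters_subset {σ τ : BIdeal G} (hσ : bLE G σ (mkClass G w))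
    (hτ : bLE G τ (mkClass G w)) : bLE G σ τ ↔ σ.letters ⊆ τ.letters :=
  ⟨letters_mono, fun h => restrict_letters hσ ▸ restrict_letters hτ ▸ restrict_mono h⟩

variable (G w) in
def lowerSetEquiv :
    {τ : BIdeal G // bLE G τ (mkClass G w)} ≃ {S : Finset V // ∀ x ∈ S, x ∈ w.1} where
  toFun τ := ⟨τ.1.letters, fun x hx => by simpa using letters_mono τ.2 hx⟩
  invFun S := ⟨restrict G w S, restrict_bLE S.1⟩
  left_inv τ := Subtype.ext (restrict_letters τ.2)
  right_inv S := Subtype.ext (letters_restrict (G := G) S.2)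

end BIdeal

end

/-- **Principal order ideals in the boolean ideal are boolean.**  If `σ ∈ 𝔅(G)` is the
class of an injective word of length `k`, then the lower order ideal `{τ : τ ≤ σ}` is
order-isomorphic to the lattice of all subsets of a `k`-element set.  (In particular,
`𝔅(G)` is a simplicial poset.) -/
theorem bIdeal_principal_ideal_boolean {V : Type*} (G : SimpleGraph V)
    (w : {w : List V // w.Nodup}) (k : ℕ) (hk : w.1.length = k) :
    ∃ φ : {τ : BIdeal G // bLE G τ (mkClass G w)} ≃ Finset (Fin k),
      ∀ a b : {τ : BIdeal G // bLE G τ (mkClass G w)},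
        bLE G a.1 b.1 ↔ φ a ⊆ φ b := by
  classical
  subst hk
  refine ⟨(BIdeal.lowerSetEquiv G w).trans
    ((Equiv.finsetSubtypeComm _).symm.trans (List.Nodup.getEquiv w.1 w.2).symm.finsetCongr),
    fun σ τ => ?_⟩
  rw [BIdeal.bLE_iff_letters_subset σ.2 τ.2]
  simp only [Equiv.trans_apply, Equiv.finsetCongr_apply, Finset.map_subset_map,
    Equiv.finsetSubtypeComm_symm_subset_iff]
  rfl
end

section
/- Let (W,S) be a Coxeter system with S finite, and regard W as a poset under the Bruhat order. An element w ∈ W is boolean (i.e. its principal lower order ideal {u ∈ W : u ≤ w} is order-isomorphic to the lattice of subsets of a finite set) if and only if no reduced word for w has a repeated letter, i.e. every reduced word for w consists of pairwise distinct generators. -/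
/-- The Bruhat order on a Coxeter group: `u ≤ w` iff some reduced word for `u` is a
subsequence of some reduced word for `w`. -/
def BruhatLE {B W : Type*} [Group W] {M : CoxeterMatrix B} (cs : CoxeterSystem M W)
    (u w : W) : Prop :=
  ∃ a b : List B, cs.IsReduced a ∧ cs.IsReduced b ∧
    cs.wordProd a = u ∧ cs.wordProd b = w ∧ a.Sublist b

/-- An element of a Coxeter group is boolean if its principal lower order ideal in the
Bruhat order is order-isomorphic to the lattice of all subsets of a finite set. -/
def IsBoolean {B W : Type*} [Group W] {M : CoxeterMatrix B} (cs : CoxeterSystem M W)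
    (w : W) : Prop :=
  ∃ (k : ℕ) (φ : {u : W // BruhatLE cs u w} ≃ Finset (Fin k)),
    ∀ a b : {u : W // BruhatLE cs u w}, BruhatLE cs a.1 b.1 ↔ φ a ⊆ φ b

/-!
Strong exchange comes from the reflection cocycle: sending `s` to `(δ_s, s)` defines a
homomorphism `W → (W → ℤˣ) ⋊ W` whose first component at `π ω` is `∏_{r ∈ lis ω} δ_r`, so the
parity of the number of occurrences of a reflection in the left inversion sequence of a word
depends only on its product. This gives the deletion property and, through the description of
the Bruhat order by reflection steps and the lifting property `s u ≤ w ∨ s u ≤ s w`, the subword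
property: `u ≤ w` iff `u` is the product of a reduced subword of *any* reduced word of `w`. In
particular the simple reflections below `w` are those occurring in a reduced word of `w`.

If all reduced words of `w` have distinct letters, so do their images in `W` (otherwise
relabelling one letter gives a reduced word with a repeated letter). Then every subword of a
reduced word `ω` is reduced, and `T ↦ π (ω.filter (· ∈ T))` is an order isomorphism from the
sets of letters of `ω` onto `[1, w]`, since the simple reflections below the image recover `T`.
Conversely, if `[1, w]` is a boolean lattice of rank `k`, the prefixes of a reduced word `ω`
form a strict chain, so `ℓ w ≤ k`, and the `k` atoms are distinct simple reflections occurring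
in `ω`, so `ω` has at least `ℓ w` distinct letters.
-/

open scoped List

open Classical in
noncomputable def reflSign {α : Type*} (r : α) : α → ℤˣ := Pi.mulSingle r (-1)

lemma reflSign_apply_self {α : Type*} (r : α) : reflSign r r = -1 := by simp [reflSign]

lemma reflSign_apply_of_ne {α : Type*} {r t : α} (h : t ≠ r) : reflSign r t = 1 := by
  simp [reflSign, h]

lemma reflSign_mul_self {α : Type*} (r : α) : reflSign r * reflSign r = 1 := by
  ext t
  simp [Int.units_mul_self]

lemma list_prod_map_reflSign_apply_of_notMem {α : Type*} {L : List α} {t : α} (ht : t ∉ L) :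
    (L.map reflSign).prod t = 1 := by
  rw [Pi.list_prod_apply, List.map_map]
  exact List.prod_eq_one fun x hx => by
    obtain ⟨r, hr, rfl⟩ := List.mem_map.mp hx
    exact reflSign_apply_of_ne (ne_of_mem_of_not_mem hr ht).symm

theorem List.Sublist.filter_mem_eq {α : Type*} [DecidableEq α] {l a : List α}
    (hl : l.Nodup) (ha : a <+ l) : l.filter (· ∈ a) = a := by
  have h₁ : a <+ l.filter (· ∈ a) := by
    simpa [List.filter_eq_self.mpr fun x hx => decide_eq_true hx] using ha.filter (· ∈ a)
  have h₂ : (l.filter (· ∈ a)).length ≤ a.length :=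
    ((hl.filter _).subperm fun x hx => by simpa using (List.mem_filter.mp hx).2).length_le
  exact (h₁.eq_of_length_le h₂).symm

namespace CoxeterSystem

variable {B W : Type*} [Group W] {M : CoxeterMatrix B} (cs : CoxeterSystem M W)

local prefix:100 "s" => cs.simple
local prefix:100 "π" => cs.wordProd
local prefix:100 "ℓ" => cs.length
local prefix:100 "lis" => cs.leftInvSeq

def conjSignAction : W →* MulAut (W → ℤˣ) where
  toFun w :=
    { toFun f t := f (w⁻¹ * t * w)
      invFun f t := f (w * t * w⁻¹)
      left_inv f := by ext t; simp [mul_assoc]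
      right_inv f := by ext t; simp [mul_assoc]
      map_mul' _ _ := rfl }
  map_one' := by ext; simp
  map_mul' _ _ := by ext; simp [mul_assoc]

@[simp] lemma conjSignAction_apply (w : W) (f : W → ℤˣ) (t : W) :
    conjSignAction w f t = f (w⁻¹ * t * w) := rfl

@[simp] lemma conjSignAction_symm_apply (w : W) (f : W → ℤˣ) (t : W) :
    (conjSignAction w).symm f t = f (w * t * w⁻¹) := rfl

lemma conjSignAction_reflSign (w r : W) :
    conjSignAction w (reflSign r) = reflSign (w * r * w⁻¹) := by
  classical
  funext t
  simp only [conjSignAction_apply, reflSign, Pi.mulSingle_apply]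
  exact if_congr ⟨fun h => by rw [← h]; group, fun h => by rw [h]; group⟩ rfl rfl

noncomputable def reflSignGen (i : B) : (W → ℤˣ) ⋊[conjSignAction] W :=
  ⟨reflSign (s i), s i⟩

lemma simple_mul_inv_pow (i j : B) (k : ℕ) :
    s i * ((s i * s j) ^ k)⁻¹ = (s i * s j) ^ k * s i := by
  have h : SemiconjBy (s i) (s i * s j)⁻¹ (s i * s j) := by
    simp [SemiconjBy, mul_assoc, cs.inv_simple]
  rw [← inv_pow]
  exact (h.pow_right k).eq

lemma reflSignGen_mul_pow (i j : B) (k : ℕ) :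
    (cs.reflSignGen i * cs.reflSignGen j) ^ k =
      ⟨∏ l ∈ Finset.range (2 * k), reflSign ((s i * s j) ^ l * s i), (s i * s j) ^ k⟩ := by
  induction k with
  | zero => ext <;> simp
  | succ k ih =>
    set g := s i * s j
    have h₀ : g ^ k * s i * (g ^ k)⁻¹ = g ^ (2 * k) * s i := by
      rw [mul_assoc, cs.simple_mul_inv_pow, ← mul_assoc, ← pow_add, two_mul]
    have h₁ : g ^ k * (s i * s j * (s i)⁻¹) * (g ^ k)⁻¹ = g ^ (2 * k + 1) * s i := by
      rw [cs.inv_simple, mul_assoc, mul_assoc, cs.simple_mul_inv_pow, ← mul_assoc, ← mul_assoc,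
        ← pow_succ, ← pow_add, two_mul, add_right_comm]
    rw [pow_succ, ih]
    refine SemidirectProduct.ext ?_ (pow_succ _ _).symm
    simp only [SemidirectProduct.mul_left, reflSignGen, conjSignAction_reflSign, map_mul, h₀, h₁]
    rw [show 2 * (k + 1) = 2 * k + 1 + 1 by ring, Finset.prod_range_succ, Finset.prod_range_succ,
      mul_assoc]

lemma reflSignGen_isLiftable : M.IsLiftable cs.reflSignGen := by
  intro i j
  rw [reflSignGen_mul_pow, cs.simple_mul_simple_pow]
  refine SemidirectProduct.ext ?_ rfl
  -- the `2 * M i j` reflections `(s i * s j) ^ l * s i` repeat with period `M i j`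
  simp only [two_mul, Finset.prod_range_add, pow_add, cs.simple_mul_simple_pow, one_mul,
    ← Finset.prod_mul_distrib, reflSign_mul_self, Finset.prod_const_one]
  rfl

noncomputable def reflSignHom : W →* (W → ℤˣ) ⋊[conjSignAction] W :=
  cs.lift ⟨cs.reflSignGen, cs.reflSignGen_isLiftable⟩

lemma reflSignHom_simple (i : B) : cs.reflSignHom (s i) = cs.reflSignGen i :=
  cs.lift_apply_simple cs.reflSignGen_isLiftable i

@[simp] lemma reflSignHom_right (w : W) : (cs.reflSignHom w).right = w := by
  have : SemidirectProduct.rightHom.comp cs.reflSignHom = MonoidHom.id W :=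
    cs.ext_simple fun i => by simp [reflSignHom_simple, reflSignGen]
  exact DFunLike.congr_fun this w

lemma reflSignHom_wordProd_left (ω : List B) :
    (cs.reflSignHom (π ω)).left = ((lis ω).map reflSign).prod := by
  induction ω with
  | nil => simp
  | cons i ω ih =>
    simp only [cs.wordProd_cons, map_mul, SemidirectProduct.mul_left, reflSignHom_simple, ih,
      leftInvSeq, map_list_prod, List.map_map, List.map_cons, List.prod_cons]
    congr 2
    refine List.map_congr_left fun r _ => ?_
    exact conjSignAction_reflSign (s i) r

lemma reflSignHom_left_apply_self {t : W} (ht : cs.IsReflection t) :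
    (cs.reflSignHom t).left t = -1 := by
  obtain ⟨x, i, rfl⟩ := ht
  simp [SemidirectProduct.mul_left, SemidirectProduct.inv_left, reflSignHom_simple, reflSignGen,
    conjSignAction_reflSign, reflSign_apply_self, cs.inv_simple, mul_assoc]

theorem mem_leftInvSeq_of_isLeftInversion {ω : List B} {t : W}
    (ht : cs.IsLeftInversion (π ω) t) : t ∈ lis ω := by
  by_contra hmem
  obtain ⟨c, hc, hcw⟩ := cs.exists_isReduced (t * π ω)
  have hsign : (cs.reflSignHom (π c)).left t = -1 := by
    rw [← hcw, map_mul, SemidirectProduct.mul_left, reflSignHom_right, Pi.mul_apply,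
      conjSignAction_apply, reflSignHom_left_apply_self cs ht.1, ht.1.inv, ht.1.mul_self,
      one_mul, reflSignHom_wordProd_left, list_prod_map_reflSign_apply_of_notMem hmem, mul_one]
  have htc : t ∈ lis c := by
    by_contra h
    rw [reflSignHom_wordProd_left, list_prod_map_reflSign_apply_of_notMem h] at hsign
    exact absurd hsign (by decide)
  have hlt := (cs.isLeftInversion_of_mem_leftInvSeq hc htc).2
  rw [← hcw, ← mul_assoc, ht.1.mul_self, one_mul] at hlt
  exact lt_asymm hlt ht.2

theorem exists_eraseIdx_of_isLeftInversion {ω : List B} {t : W}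
    (ht : cs.IsLeftInversion (π ω) t) : ∃ m < ω.length, t * π ω = π (ω.eraseIdx m) := by
  obtain ⟨m, hm, rfl⟩ := List.mem_iff_getElem.mp (cs.mem_leftInvSeq_of_isLeftInversion ht)
  refine ⟨m, by simpa using hm, ?_⟩
  rw [← List.getD_eq_getElem _ 1 hm, getD_leftInvSeq_mul_wordProd]

theorem exists_reduced_sublist (ω : List B) : ∃ a, a <+ ω ∧ cs.IsReduced a ∧ π a = π ω := by
  induction ω with
  | nil => exact ⟨[], .slnil, by simp [IsReduced], rfl⟩
  | cons i ω ih =>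
    obtain ⟨c, hc, hred, hprod⟩ := ih
    rcases cs.length_simple_mul (π c) i with hlen | hlen
    · refine ⟨i :: c, hc.cons_cons i, ?_, by rw [wordProd_cons, wordProd_cons, hprod]⟩
      rw [IsReduced, wordProd_cons, hlen, hred, List.length_cons]
    · obtain ⟨m, hm, hdel⟩ := cs.exists_eraseIdx_of_isLeftInversion
        (ω := c) (t := s i) ⟨cs.isReflection_simple i, by omega⟩
      refine ⟨c.eraseIdx m, ((c.eraseIdx_sublist m).trans hc).cons i, ?_, ?_⟩
      · rw [IsReduced, ← hdel, List.length_eraseIdx_of_lt hm, ← hred]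
        omega
      · rw [← hdel, hprod, wordProd_cons]

def BruhatStep (u w : W) : Prop := ∃ t, cs.IsReflection t ∧ w = t * u ∧ ℓ u < ℓ w

local notation:50 u " ≤ᵣ " w => Relation.ReflTransGen (BruhatStep cs) u w

lemma bruhatStep_simple_mul {u : W} {i : B} (h : ℓ u < ℓ (s i * u)) :
    cs.BruhatStep u (s i * u) :=
  ⟨s i, cs.isReflection_simple i, rfl, h⟩

theorem exists_reduced_sublist_of_reflTransGen {u w : W} (h : u ≤ᵣ w) {ω : List B}
    (hω : cs.IsReduced ω) (hw : π ω = w) : ∃ a, a <+ ω ∧ cs.IsReduced a ∧ π a = u := by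
  induction h using Relation.ReflTransGen.head_induction_on with
  | refl => exact ⟨ω, .refl ω, hω, hw⟩
  | head hstep _ ih =>
    obtain ⟨t, ht, rfl, hlt⟩ := hstep
    obtain ⟨a, ha, -, hprod⟩ := ih
    obtain ⟨m, -, hdel⟩ := cs.exists_eraseIdx_of_isLeftInversion
      (ω := a) ⟨ht, by rwa [hprod, ← mul_assoc, ht.mul_self, one_mul]⟩
    rw [hprod, ← mul_assoc, ht.mul_self, one_mul] at hdel
    obtain ⟨b, hb, hbred, hbprod⟩ := cs.exists_reduced_sublist (a.eraseIdx m)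
    exact ⟨b, hb.trans ((a.eraseIdx_sublist m).trans ha), hbred, hbprod.trans hdel.symm⟩

variable {cs} in
theorem BruhatStep.simple_mul_or {v w : W} (h : cs.BruhatStep v w) (i : B) :
    (s i * v ≤ᵣ w) ∨ (s i * v ≤ᵣ s i * w) := by
  obtain ⟨t, ht, rfl, hlt⟩ := h
  rcases cs.length_simple_mul v i with hv | hv
  · have hconj : s i * t * (s i)⁻¹ * (s i * v) = s i * (t * v) := by group
    have hne := (ht.conj (s i)).length_mul_right_ne (s i * v)
    rw [hconj] at hne
    rcases hne.lt_or_gt with hdown | hup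
    · left
      suffices s i * v = t * v by rw [this]
      -- strong exchange for `t` in the word `i :: c` of `t * v` can only delete the first letter
      obtain ⟨c, hc, hcprod⟩ := cs.exists_isReduced (s i * (t * v))
      have hword : π (i :: c) = t * v := by
        rw [wordProd_cons, ← hcprod, cs.simple_mul_simple_cancel_left]
      obtain ⟨m, -, hdel⟩ := cs.exists_eraseIdx_of_isLeftInversion
        (ω := i :: c) ⟨ht, by rwa [hword, ← mul_assoc, ht.mul_self, one_mul]⟩
      rw [hword, ← mul_assoc, ht.mul_self, one_mul] at hdel
      rcases m with _ | m
      · rw [List.eraseIdx_cons_zero] at hdel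
        calc s i * v = s i * π c := by rw [hdel]
          _ = t * v := by rw [← hcprod, cs.simple_mul_simple_cancel_left]
      · rw [List.eraseIdx_cons_succ, wordProd_cons] at hdel
        have : ℓ (s i * v) ≤ ℓ (s i * (t * v)) :=
          calc ℓ (s i * v) = ℓ (π (c.eraseIdx m)) := by
                rw [hdel, cs.simple_mul_simple_cancel_left]
            _ ≤ c.length := (cs.length_wordProd_le _).trans (c.length_eraseIdx_le m)
            _ = ℓ (s i * (t * v)) := by rw [hcprod, hc]
        omega
    · exact .inr (.single ⟨_, ht.conj (s i), hconj.symm, hup⟩)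
  · refine .inl (.head ?_ (.single ⟨t, ht, rfl, hlt⟩))
    have := cs.bruhatStep_simple_mul (u := s i * v) (i := i)
    rw [cs.simple_mul_simple_cancel_left] at this
    exact this (by omega)

theorem reflTransGen_simple_mul_or {u w : W} (h : u ≤ᵣ w) (i : B) :
    (s i * u ≤ᵣ w) ∨ (s i * u ≤ᵣ s i * w) := by
  induction h with
  | refl => exact .inr .refl
  | tail _ hvw ih =>
    rcases ih with h₁ | h₁
    · exact .inl (h₁.tail hvw)
    · exact (hvw.simple_mul_or i).imp h₁.trans h₁.trans

theorem reflTransGen_of_sublist {a b : List B} (hb : cs.IsReduced b) (hab : a <+ b) :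
    π a ≤ᵣ π b := by
  induction b generalizing a with
  | nil => rw [List.sublist_nil.mp hab]
  | cons i b ih =>
    have hb' : cs.IsReduced b := by simpa using hb.drop 1
    have hstep : cs.BruhatStep (π b) (s i * π b) := by
      refine cs.bruhatStep_simple_mul ?_
      rw [← wordProd_cons, hb, hb', List.length_cons]
      exact Nat.lt_succ_self _
    rw [wordProd_cons]
    rcases List.sublist_cons_iff.mp hab with hab | ⟨a', rfl, hab'⟩
    · exact (ih hb' hab).tail hstep
    · rw [wordProd_cons]
      exact (cs.reflTransGen_simple_mul_or (ih hb' hab') i).elim (·.tail hstep) id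

variable {cs} in
theorem _root_.BruhatLE.exists_sublist {u w : W} (h : BruhatLE cs u w) {ω : List B}
    (hω : cs.IsReduced ω) (hw : π ω = w) : ∃ a, a <+ ω ∧ cs.IsReduced a ∧ π a = u := by
  obtain ⟨a, b, -, hb, rfl, rfl, hab⟩ := h
  exact cs.exists_reduced_sublist_of_reflTransGen (cs.reflTransGen_of_sublist hb hab) hω hw

variable {cs} in
theorem _root_.BruhatLE.trans {u v w : W} (huv : BruhatLE cs u v) (hvw : BruhatLE cs v w) :
    BruhatLE cs u w := by
  obtain ⟨b, c, hb, hc, rfl, rfl, hbc⟩ := hvw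
  obtain ⟨a, hab, ha, rfl⟩ := huv.exists_sublist hb rfl
  exact ⟨a, c, ha, hc, rfl, rfl, hab.trans hbc⟩

theorem bruhatLE_refl (u : W) : BruhatLE cs u u := by
  obtain ⟨ω, hω, rfl⟩ := cs.exists_isReduced u
  exact ⟨ω, ω, hω, hω, rfl, rfl, .refl ω⟩

theorem one_bruhatLE (u : W) : BruhatLE cs 1 u := by
  obtain ⟨ω, hω, rfl⟩ := cs.exists_isReduced u
  exact ⟨[], ω, by simp [IsReduced], hω, rfl, rfl, List.nil_sublist ω⟩

theorem isReduced_singleton (i : B) : cs.IsReduced [i] := by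
  simp [IsReduced, cs.length_simple]

theorem simple_bruhatLE_iff {ω : List B} (hω : cs.IsReduced ω) (i : B) :
    BruhatLE cs (s i) (π ω) ↔ ∃ j ∈ ω, s j = s i := by
  constructor
  · intro h
    obtain ⟨a, ha, hared, hprod⟩ := h.exists_sublist hω rfl
    have : a.length = 1 := by rw [← hared, hprod, cs.length_simple]
    obtain ⟨j, rfl⟩ := List.length_eq_one_iff.mp this
    exact ⟨j, ha.subset (List.mem_singleton_self j), by simpa using hprod⟩
  · rintro ⟨j, hj, hji⟩
    exact ⟨[j], ω, cs.isReduced_singleton j, hω, by simpa using hji, rfl,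
      List.singleton_sublist.mpr hj⟩

theorem simple_bruhatLE_of_isLeftDescent {u : W} {i : B} (h : cs.IsLeftDescent u i) :
    BruhatLE cs (s i) u := by
  unfold IsLeftDescent at h
  obtain ⟨c, hc, hcprod⟩ := cs.exists_isReduced (s i * u)
  have hu : π (i :: c) = u := by rw [wordProd_cons, ← hcprod, cs.simple_mul_simple_cancel_left]
  refine ⟨[i], i :: c, cs.isReduced_singleton i, ?_, by simp, hu, by simp⟩
  rw [IsReduced, hu, List.length_cons, ← hc, ← hcprod]
  rcases cs.length_simple_mul u i with h' | h' <;> omega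

theorem isReduced_of_sublist {ω a : List B} (hω : cs.IsReduced ω)
    (hnd : (ω.map cs.simple).Nodup) (ha : a <+ ω) : cs.IsReduced a := by
  induction ω generalizing a with
  | nil => rw [List.sublist_nil.mp ha]; simp [IsReduced]
  | cons i ω ih =>
    have hω' : cs.IsReduced ω := by simpa using hω.drop 1
    rw [List.map_cons, List.nodup_cons] at hnd
    rcases List.sublist_cons_iff.mp ha with ha | ⟨a', rfl, ha'⟩
    · exact ih hω' hnd.2 ha
    · have hred := ih hω' hnd.2 ha'
      rcases cs.length_simple_mul (π a') i with hlen | hlen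
      · rw [IsReduced, wordProd_cons, hlen, hred, List.length_cons]
      · obtain ⟨j, hj, hji⟩ := (cs.simple_bruhatLE_iff hred i).mp
          (cs.simple_bruhatLE_of_isLeftDescent (by rw [IsLeftDescent]; omega))
        exact absurd (hji ▸ List.mem_map_of_mem (ha'.subset hj)) hnd.1

theorem nodup_map_simple_of_forall_nodup {w : W}
    (H : ∀ ω : List B, cs.IsReduced ω → π ω = w → ω.Nodup) {ω : List B}
    (hω : cs.IsReduced ω) (hw : π ω = w) : (ω.map cs.simple).Nodup := by
  classical
  refine (List.nodup_map_iff_inj_on (H ω hω hw)).mpr fun i hi j hj hij => ?_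
  let f : B → B := fun x => if x = j then i else x
  have hprod : π (ω.map f) = π ω := by
    simp only [wordProd, List.map_map]
    congr 1
    exact List.map_congr_left fun x _ => by by_cases hx : x = j <;> simp [f, hx, hij]
  have hred : cs.IsReduced (ω.map f) := by rw [IsReduced, hprod, hω, List.length_map]
  simpa [f] using List.inj_on_of_nodup_map (H _ hred (hprod.trans hw)) hi hj

theorem bruhatLE_filter_iff [DecidableEq B] {ω : List B} (hω : cs.IsReduced ω)
    (hnd : (ω.map cs.simple).Nodup) {T₁ T₂ : Finset B} (hT₁ : T₁ ⊆ ω.toFinset) :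
    BruhatLE cs (π (ω.filter (· ∈ T₁))) (π (ω.filter (· ∈ T₂))) ↔ T₁ ⊆ T₂ := by
  have hred (T : Finset B) : cs.IsReduced (ω.filter (· ∈ T)) :=
    cs.isReduced_of_sublist hω hnd List.filter_sublist
  constructor
  · intro h x hx
    have hxω : x ∈ ω := List.mem_toFinset.mp (hT₁ hx)
    have hx₁ : BruhatLE cs (s x) (π (ω.filter (· ∈ T₁))) :=
      (cs.simple_bruhatLE_iff (hred T₁) x).mpr ⟨x, by simpa [hxω] using hx, rfl⟩
    obtain ⟨j, hj, hjx⟩ := (cs.simple_bruhatLE_iff (hred T₂) x).mp (hx₁.trans h)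
    obtain ⟨hjω, hjT⟩ := by simpa using hj
    rwa [← List.inj_on_of_nodup_map hnd hjω hxω hjx]
  · intro h
    refine ⟨_, _, hred T₁, hred T₂, rfl, rfl, List.monotone_filter_right ω fun x hx => ?_⟩
    simpa using h (by simpa using hx)

theorem isBoolean_of_surjective {α : Type*} [Fintype α] {w : W} (g : Finset α → W)
    (hg : ∀ T, BruhatLE cs (g T) w) (hsurj : ∀ u, BruhatLE cs u w → ∃ T, g T = u)
    (hle : ∀ T₁ T₂, BruhatLE cs (g T₁) (g T₂) ↔ T₁ ⊆ T₂) : IsBoolean cs w := by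
  let G : Finset α → {u // BruhatLE cs u w} := fun T => ⟨g T, hg T⟩
  have hG : Function.Bijective G := by
    refine ⟨fun T₁ T₂ h => ?_, fun u => ?_⟩
    · have h' : g T₁ = g T₂ := congrArg Subtype.val h
      exact ((hle T₁ T₂).mp (h' ▸ cs.bruhatLE_refl _)).antisymm
        ((hle T₂ T₁).mp (h' ▸ cs.bruhatLE_refl _))
    · obtain ⟨T, hT⟩ := hsurj u.1 u.2
      exact ⟨T, Subtype.ext hT⟩
  refine ⟨Fintype.card α,
    (Equiv.ofBijective G hG).symm.trans (Fintype.equivFin α).finsetCongr, fun a b => ?_⟩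
  obtain ⟨T₁, rfl⟩ := hG.2 a
  obtain ⟨T₂, rfl⟩ := hG.2 b
  simp [G, hle]

theorem isBoolean_of_forall_nodup {w : W}
    (H : ∀ ω : List B, cs.IsReduced ω → π ω = w → ω.Nodup) : IsBoolean cs w := by
  classical
  obtain ⟨ω, hω, rfl⟩ := cs.exists_isReduced w
  have hnd := cs.nodup_map_simple_of_forall_nodup H hω rfl
  have hsub (T : Finset {i // i ∈ ω}) : T.map (.subtype _) ⊆ ω.toFinset := fun x hx => by
    obtain ⟨y, -, rfl⟩ := Finset.mem_map.mp hx
    exact List.mem_toFinset.mpr y.2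
  refine cs.isBoolean_of_surjective (fun T => π (ω.filter (· ∈ T.map (.subtype _))))
    (fun T => ⟨_, ω, cs.isReduced_of_sublist hω hnd List.filter_sublist, hω, rfl, rfl,
      List.filter_sublist⟩) (fun u hu => ?_)
    (fun T₁ T₂ => by rw [cs.bruhatLE_filter_iff hω hnd (hsub T₁), Finset.map_subset_map])
  obtain ⟨a, ha, -, rfl⟩ := hu.exists_sublist hω rfl
  refine ⟨a.toFinset.subtype (· ∈ ω), ?_⟩
  conv_rhs => rw [← ha.filter_mem_eq (hnd.of_map _)]
  rw [Finset.subtype_map]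
  congr 1
  exact List.filter_congr fun x hx => by simp [hx]

section BooleanEquiv

variable {cs} {w : W} {k : ℕ} (φ : {u : W // BruhatLE cs u w} ≃ Finset (Fin k))
  (hφ : ∀ a b : {u : W // BruhatLE cs u w}, BruhatLE cs a.1 b.1 ↔ φ a ⊆ φ b)
include hφ

theorem length_le_of_booleanEquiv : ℓ w ≤ k := by
  obtain ⟨ω, hω, rfl⟩ := cs.exists_isReduced w
  let v (j : ℕ) : {u : W // BruhatLE cs u (π ω)} :=
    ⟨π (ω.take j), ω.take j, ω, hω.take j, hω, rfl, rfl, List.take_sublist j ω⟩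
  have hlen (j : ℕ) (hj : j ≤ ω.length) : ℓ (v j).1 = j := by
    rw [(hω.take j).eq, List.length_take]
    omega
  have hgrow (j : ℕ) (hj : j ≤ ω.length) : j ≤ (φ (v j)).card := by
    induction j with
    | zero => exact Nat.zero_le _
    | succ j ih =>
      have hle : φ (v j) ⊆ φ (v (j + 1)) := (hφ _ _).mp
        ⟨_, _, hω.take j, hω.take (j + 1), rfl, rfl, List.take_sublist_take_left (by omega)⟩
      have hne : φ (v j) ≠ φ (v (j + 1)) := fun h => by
        have := congrArg (fun u => ℓ u.1) (φ.injective h)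
        simp only [hlen j (by omega), hlen (j + 1) hj] at this
        omega
      exact (ih (by omega)).trans_lt
        (Finset.card_lt_card (Finset.ssubset_iff_subset_ne.mpr ⟨hle, hne⟩))
  calc ℓ (π ω) = ω.length := hω
    _ ≤ (φ (v ω.length)).card := hgrow _ le_rfl
    _ ≤ k := (Finset.card_le_univ _).trans (by simp)

theorem booleanEquiv_apply_one : φ ⟨1, cs.one_bruhatLE w⟩ = ∅ :=
  Finset.subset_empty.mp (by simpa using (hφ ⟨1, _⟩ (φ.symm ∅)).mp (cs.one_bruhatLE _))

theorem exists_mem_eq_simple_of_booleanEquiv {ω : List B} (hω : cs.IsReduced ω)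
    (hw : π ω = w) (x : Fin k) : ∃ j ∈ ω, (φ.symm {x}).1 = s j := by
  set u := φ.symm {x}
  have hu : φ u = {x} := φ.apply_symm_apply _
  obtain ⟨a, _, ha, -, hau, -, -⟩ := u.2
  cases a with
  | nil =>
    have : u = ⟨1, cs.one_bruhatLE w⟩ := Subtype.ext (by simpa using hau.symm)
    rw [this, booleanEquiv_apply_one φ hφ] at hu
    exact absurd hu.symm (Finset.singleton_ne_empty x)
  | cons j a =>
    have hju : BruhatLE cs (s j) u.1 :=
      ⟨[j], j :: a, cs.isReduced_singleton j, ha, by simp, hau, by simp⟩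
    have hjw : BruhatLE cs (s j) w := hju.trans u.2
    have hj : φ ⟨s j, hjw⟩ = {x} := by
      rcases Finset.subset_singleton_iff.mp (hu ▸ (hφ ⟨s j, hjw⟩ u).mp hju) with h | h
      · have h1 : s j = 1 :=
          congrArg Subtype.val (φ.injective (h.trans (booleanEquiv_apply_one φ hφ).symm))
        exact absurd (cs.length_simple j) (by rw [h1, cs.length_one]; decide)
      · exact h
    obtain ⟨j', hj', hsj⟩ := (cs.simple_bruhatLE_iff hω j).mp (hw ▸ hjw)
    exact ⟨j', hj', by rw [hsj]; exact congrArg Subtype.val (φ.symm_apply_eq.mpr hj.symm)⟩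

theorem card_le_of_booleanEquiv [DecidableEq B] {ω : List B} (hω : cs.IsReduced ω)
    (hw : π ω = w) : k ≤ ω.toFinset.card := by
  choose f hfω hf using exists_mem_eq_simple_of_booleanEquiv φ hφ hω hw
  calc k = (Finset.univ : Finset (Fin k)).card := by simp
    _ ≤ ω.toFinset.card := Finset.card_le_card_of_injOn f
        (fun x _ => List.mem_toFinset.mpr (hfω x)) fun x _ y _ hxy =>
          Finset.singleton_injective (φ.symm.injective (Subtype.ext (by rw [hf, hf, hxy])))

end BooleanEquiv

theorem nodup_of_isBoolean {w : W} (h : IsBoolean cs w) {ω : List B} (hω : cs.IsReduced ω)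
    (hw : π ω = w) : ω.Nodup := by
  classical
  obtain ⟨k, φ, hφ⟩ := h
  have h₁ := length_le_of_booleanEquiv φ hφ
  have h₂ := card_le_of_booleanEquiv φ hφ hω hw
  rw [← hw, hω] at h₁
  exact Multiset.coe_nodup.mp (Multiset.toFinset_card_eq_card_iff_nodup.mp
    (le_antisymm ω.toFinset_card_le (h₁.trans h₂)))

end CoxeterSystem

theorem isBoolean_iff_nodup_reduced_words_general {B W : Type*} [Group W]
    {M : CoxeterMatrix B} (cs : CoxeterSystem M W) (w : W) :
    IsBoolean cs w ↔
      ∀ ω : List B, cs.IsReduced ω → cs.wordProd ω = w → ω.Nodup :=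
  ⟨fun h _ hω hw => cs.nodup_of_isBoolean h hω hw, cs.isBoolean_of_forall_nodup⟩

/-- **Characterization of boolean elements.**  Let `(W,S)` be a Coxeter system with `S`
finite.  An element `w ∈ W` is boolean if and only if every reduced word for `w` consists
of pairwise distinct generators. -/
theorem isBoolean_iff_nodup_reduced_words {B W : Type*} [Group W] [Fintype B]
    {M : CoxeterMatrix B} (cs : CoxeterSystem M W) (w : W) :
    IsBoolean cs w ↔
      ∀ ω : List B, cs.IsReduced ω → cs.wordProd ω = w → ω.Nodup :=
  isBoolean_iff_nodup_reduced_words_general cs w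
end

section
/- For every n ≥ 1, Σ_{k=1}^{n} (-1)^{k-1} · ( Σ_{i=1}^{k} C(n+1−i, k+1−i) · C(k−1, i−1) ) = (-1)^{n-1} f(n−1) + 1, where C(a,b) denotes the binomial coefficient and f is the Fibonacci sequence. (The inner sum counts the boolean elements of length k in the Coxeter group A_n, so the left-hand side is the Euler characteristic χ(Δ(A_n)) of the boolean complex of A_n.) -/
/-!
Write `B(n, k) = ∑_j C(k-1, j) C(n-j, k-j)` for the number of boolean elements of length `k`
in `A_n` and `T(n) = ∑_k (-1)^k B(n, k+1)` for the Euler characteristic. Pascal's rule applied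
to the second factor expresses `B(n+1, ·) - B(n, ·)` through the companion numbers
`X(n, k) = ∑_j C(k-1, j) C(n-j, k-1-j)`, and applied to the first factor it expresses
`X(n+1, ·) - X(n, ·)` through `B(n+1, ·)`. Taking alternating sums gives two coupled
recurrences for `T` and the alternating sum `V` of `X`; eliminating `V` leaves
`T(n+2) = 1 - T(n+1) + T(n)`, so `T(n+1) - 1` satisfies the recursion of `(-1)^n f(n)`.
-/

open Finset

theorem Finset.sum_Icc_one_eq_sum_range {M : Type*} [AddCommMonoid M] (f : ℕ → M) (k : ℕ) :
    ∑ i ∈ Icc 1 k, f i = ∑ j ∈ range k, f (j + 1) := by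
  rw [range_eq_Ico, sum_Ico_add' f 0 k 1, zero_add, Ico_add_one_right_eq_Icc]

namespace BooleanComplexA

/-- The inner sum of the theorem, reindexed by `j = i - 1`. -/
def booleanCount (n k : ℕ) : ℕ := ∑ j ∈ range k, (k - 1).choose j * (n - j).choose (k - j)

def booleanIncrement (n k : ℕ) : ℕ :=
  ∑ j ∈ range k, (k - 1).choose j * (n - j).choose (k - 1 - j)

def eulerChar (n : ℕ) : ℤ := ∑ k ∈ range n, (-1) ^ k * (booleanCount n (k + 1) : ℤ)

def incrementAltSum (n : ℕ) : ℤ :=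
  ∑ k ∈ range (n + 1), (-1) ^ k * (booleanIncrement n (k + 1) : ℤ)

theorem booleanCount_succ_left {n k : ℕ} (hk : k ≤ n + 1) :
    booleanCount (n + 1) k = booleanIncrement n k + booleanCount n k := by
  rw [booleanCount, booleanIncrement, booleanCount, ← sum_add_distrib]
  refine sum_congr rfl fun j hj => ?_
  have hj : j < k := mem_range.mp hj
  rw [show n + 1 - j = n - j + 1 by omega, show k - j = k - 1 - j + 1 by omega,
    Nat.choose_succ_succ, mul_add]

theorem booleanIncrement_succ_succ (n k : ℕ) :
    booleanIncrement (n + 1) (k + 2) =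
      booleanCount (n + 1) (k + 1) + booleanIncrement n (k + 1) := by
  have hB : booleanCount (n + 1) (k + 1) =
      ∑ j ∈ range (k + 1), k.choose (j + 1) * (n - j).choose (k - j) + (n + 1).choose (k + 1) := by
    rw [booleanCount, sum_range_succ', sum_range_succ, Nat.choose_succ_self, zero_mul, add_zero]
    simp
  rw [hB, booleanIncrement, booleanIncrement, sum_range_succ']
  simp only [Nat.add_one_sub_one, Nat.choose_succ_succ', Nat.reduceSubDiff, add_mul,
    sum_add_distrib, Nat.choose_zero_right, tsub_zero, one_mul, add_tsub_cancel_right]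
  ring

theorem booleanCount_self_succ (n : ℕ) : booleanCount n (n + 1) = 0 :=
  sum_eq_zero fun j hj => by
    have hj : j < n + 1 := mem_range.mp hj
    rw [Nat.choose_eq_zero_of_lt (by omega : n - j < n + 1 - j), mul_zero]

theorem booleanIncrement_one (n : ℕ) : booleanIncrement n 1 = 1 := by
  simp [booleanIncrement]

theorem eulerChar_succ (n : ℕ) : eulerChar (n + 1) = incrementAltSum n + eulerChar n := by
  have hT : eulerChar n = ∑ k ∈ range (n + 1), (-1) ^ k * (booleanCount n (k + 1) : ℤ) := by
    rw [eulerChar, sum_range_succ, booleanCount_self_succ, Nat.cast_zero, mul_zero, add_zero]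
  rw [hT, eulerChar, incrementAltSum, ← sum_add_distrib]
  refine sum_congr rfl fun k hk => ?_
  rw [booleanCount_succ_left (by have := mem_range.mp hk; omega)]
  push_cast
  ring

theorem incrementAltSum_succ (n : ℕ) :
    incrementAltSum (n + 1) = 1 - eulerChar (n + 1) - incrementAltSum n := by
  rw [incrementAltSum, sum_range_succ', booleanIncrement_one]
  simp only [booleanIncrement_succ_succ, pow_succ, Nat.cast_add]
  rw [eulerChar, incrementAltSum]
  simp only [mul_neg, mul_one, mul_add, neg_mul, sum_add_distrib, sum_neg_distrib, pow_zero,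
    Nat.cast_one]
  ring

theorem eulerChar_add_two (n : ℕ) :
    eulerChar (n + 2) = 1 - eulerChar (n + 1) + eulerChar n := by
  linarith [eulerChar_succ (n + 1), incrementAltSum_succ n, eulerChar_succ n]

theorem eulerChar_succ_eq_fib (n : ℕ) :
    eulerChar (n + 1) = (-1) ^ n * (Nat.fib n : ℤ) + 1 := by
  induction n using Nat.twoStepInduction with
  | zero => simp [eulerChar, booleanCount]
  | one => simp [eulerChar, booleanCount, sum_range_succ]
  | more n ih₀ ih₁ =>
    rw [eulerChar_add_two, ih₀, ih₁, Nat.fib_add_two]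
    push_cast
    ring

theorem sum_Icc_eq_eulerChar (n : ℕ) :
    ∑ k ∈ Icc 1 n, (-1 : ℤ) ^ (k - 1) *
        ∑ i ∈ Icc 1 k, (((n + 1 - i).choose (k + 1 - i) * (k - 1).choose (i - 1) : ℕ) : ℤ)
      = eulerChar n := by
  rw [sum_Icc_one_eq_sum_range, eulerChar]
  refine sum_congr rfl fun k _ => ?_
  rw [sum_Icc_one_eq_sum_range, booleanCount, Nat.add_sub_cancel, Nat.cast_sum]
  refine congrArg _ (sum_congr rfl fun j _ => ?_)
  rw [Nat.add_sub_add_right, Nat.add_sub_add_right, Nat.add_sub_cancel, mul_comm]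

end BooleanComplexA

/-- **Euler characteristic of the boolean complex of `A_n`.**  For every `n ≥ 1`,
`∑_{k=1}^{n} (-1)^{k-1} ∑_{i=1}^{k} C(n+1-i, k+1-i) C(k-1, i-1) = (-1)^{n-1} f(n-1) + 1`,
where the inner sum counts boolean elements of length `k` in the Coxeter group `A_n`
and `f` is the Fibonacci sequence. -/
theorem eulerChar_boolean_complex_A (n : ℕ) (hn : 1 ≤ n) :
    ∑ k ∈ Finset.Icc 1 n, (-1 : ℤ) ^ (k - 1) *
        ∑ i ∈ Finset.Icc 1 k,
          (((n + 1 - i).choose (k + 1 - i) * (k - 1).choose (i - 1) : ℕ) : ℤ)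
      = (-1) ^ (n - 1) * (Nat.fib (n - 1) : ℤ) + 1 := by
  obtain ⟨m, rfl⟩ := Nat.exists_eq_add_of_le' hn
  rw [BooleanComplexA.sum_Icc_eq_eulerChar, Nat.add_sub_cancel,
    BooleanComplexA.eulerChar_succ_eq_fib]
end

section
/- For every n ≥ 1, let P_n be the path graph on vertices 1, 2, …, n with edges {i, i+1} for 1 ≤ i < n (the unlabeled Coxeter graph of the Coxeter groups A_n and B_n). Then β(P_n) = f(n−1), where f is the Fibonacci sequence. -/
/-- The path graph on vertices `0, 1, …, n-1`, with edges `{i, i+1}`. -/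
def pathG (n : ℕ) : SimpleGraph (Fin n) where
  Adj i j := i.1 + 1 = j.1 ∨ j.1 + 1 = i.1
  symm := ⟨by intro i j h; tauto⟩
  loopless := ⟨by intro i h; omega⟩

/-!
Two injective words are commutation-equivalent iff they are permutations of each other that
order every pair of adjacent letters alike: the first letter of one word is then preceded in the
other only by letters it commutes with, so it can be moved to the front, and induction finishes.
On the path, the class of a word with letter set `S` is therefore determined by choosing, for each
of the `e(S)` edges `{i, i + 1} ⊆ S`, whether `i` comes before `i + 1`, and every choice occurs;
hence `b_k(P_n) = ∑_{|S| = k} 2^{e(S)}` and `β(P_n) = (-1)^n ∑_S (-1)^{|S|} 2^{e(S)}`.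
Splitting off the largest vertex gives a linear recursion for this sum and for its part over the
sets `S` containing the largest vertex; the Fibonacci numbers solve it.
-/

open scoped List

namespace List

variable {α : Type*} {l : List α} {a x y : α}

theorem pair_sublist_cons_iff (hx : x ≠ a) : [x, y] <+ a :: l ↔ [x, y] <+ l := by
  simp [sublist_cons_iff, hx]

theorem pair_sublist_erase_iff [DecidableEq α] (hx : a ≠ x) (hy : a ≠ y) :
    [x, y] <+ l.erase a ↔ [x, y] <+ l :=
  ⟨fun h => h.trans (erase_sublist ..), fun h => by
    simpa [erase_of_not_mem, hx.symm, hy.symm] using h.erase a⟩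

theorem Nodup.pair_sublist_iff (hl : l.Nodup) (hxy : x ≠ y) :
    [x, y] <+ l ↔ x ∈ l ∧ y ∈ l ∧ ¬[y, x] <+ l := by
  induction l with
  | nil => simp
  | cons c t ih =>
    rw [nodup_cons] at hl
    by_cases hxc : x = c
    · subst hxc
      simpa [pair_sublist_cons_iff (Ne.symm hxy), hxy.symm, hl.1] using
        fun _ h => hl.1 (h.subset (by simp))
    by_cases hyc : y = c
    · subst hyc
      simpa [pair_sublist_cons_iff hxc, hxy, hl.1] using fun h => hl.1 (h.subset (by simp))
    simp [pair_sublist_cons_iff hxc, pair_sublist_cons_iff hyc, hxc, hyc, ih hl.2]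

theorem pair_sublist_append_singleton_iff :
    [x, y] <+ l ++ [a] ↔ [x, y] <+ l ∨ x ∈ l ∧ y = a := by
  rw [← reverse_sublist, reverse_append, reverse_singleton, singleton_append, sublist_cons_iff,
    reverse_sublist]
  simp [and_comm]

end List

section Commutation

variable {V : Type*} {G : SimpleGraph V} {w w' : List V}

theorem CommStep.perm_s8 (h : CommStep G w w') : w.Perm w' := by
  obtain ⟨a, b, u, v, -, rfl, rfl⟩ := h
  exact (List.Perm.swap b a v).append_left u

theorem CommStep.cons (c : V) (h : CommStep G w w') : CommStep G (c :: w) (c :: w') := by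
  obtain ⟨a, b, u, v, hab, rfl, rfl⟩ := h
  exact ⟨a, b, c :: u, v, hab, rfl, rfl⟩

/-- Erasing a letter `c ∈ {a, b}` outside `{x, y}` turns both words into the same one; such a `c`
exists because `a, b` are not adjacent. -/
theorem CommStep.pair_sublist_iff [DecidableEq V] (hw : w.Nodup) (h : CommStep G w w') {x y : V}
    (hxy : G.Adj x y) : [x, y] <+ w ↔ [x, y] <+ w' := by
  obtain ⟨a, b, u, v, hab, rfl, rfl⟩ := h
  have hnd := List.nodup_append'.mp hw
  have hau : a ∉ u := fun h => hnd.2.2 h (by simp)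
  have hbu : b ∉ u := fun h => hnd.2.2 h (by simp)
  have hne : a ≠ b := fun h => by simp [h] at hnd
  have key : ∀ c, c ∉ u → c ≠ x → c ≠ y → (c = a ∨ c = b) →
      ([x, y] <+ u ++ a :: b :: v ↔ [x, y] <+ u ++ b :: a :: v) := by
    rintro c hcu hcx hcy hc
    rw [← List.pair_sublist_erase_iff hcx hcy,
      ← List.pair_sublist_erase_iff (l := u ++ b :: a :: v) hcx hcy,
      List.erase_append_right _ hcu, List.erase_append_right _ hcu]
    rcases hc with rfl | rfl <;> simp [hne, hne.symm]
  by_cases ha : a ≠ x ∧ a ≠ y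
  · exact key a hau ha.1 ha.2 (Or.inl rfl)
  by_cases hb : b ≠ x ∧ b ≠ y
  · exact key b hbu hb.1 hb.2 (Or.inr rfl)
  exfalso
  rw [not_and_or, not_ne_iff, not_ne_iff] at ha hb
  rcases ha with rfl | rfl <;> rcases hb with rfl | rfl <;> simp_all [hxy.symm]

theorem perm_of_eqvGen_commStep_s8 (h : Relation.EqvGen (CommStep G) w w') : w.Perm w' := by
  induction h with
  | rel _ _ h => exact h.perm_s8
  | refl => rfl
  | symm _ _ _ ih => exact ih.symm
  | trans _ _ _ _ _ ih₁ ih₂ => exact ih₁.trans ih₂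

theorem eqvGen_commStep_cons (c : V) (h : Relation.EqvGen (CommStep G) w w') :
    Relation.EqvGen (CommStep G) (c :: w) (c :: w') := by
  induction h with
  | rel _ _ h => exact .rel _ _ (h.cons c)
  | refl => exact .refl _
  | symm _ _ _ ih => exact .symm _ _ ih
  | trans _ _ _ _ _ ih₁ ih₂ => exact .trans _ _ _ ih₁ ih₂

theorem eqvGen_commStep_append_cons_s8 {x : V} {u v : List V} (h : ∀ y ∈ u, ¬G.Adj y x) :
    Relation.EqvGen (CommStep G) (u ++ x :: v) (x :: (u ++ v)) := by
  induction u with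
  | nil => exact .refl _
  | cons y u ih =>
    refine .trans _ _ _ (eqvGen_commStep_cons y (ih fun z hz => h z (.tail y hz))) (.rel _ _ ?_)
    exact ⟨y, x, [], u ++ v, h y (.head u), rfl, rfl⟩

variable [DecidableEq V]

theorem pair_sublist_iff_of_eqvGen_commStep (h : Relation.EqvGen (CommStep G) w w')
    (hw : w.Nodup) {x y : V} (hxy : G.Adj x y) : [x, y] <+ w ↔ [x, y] <+ w' := by
  induction h with
  | rel _ _ h => exact h.pair_sublist_iff hw hxy
  | refl => rfl
  | symm _ _ h ih => exact (ih ((perm_of_eqvGen_commStep_s8 h).nodup_iff.mpr hw)).symm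
  | trans _ _ _ h _ ih₁ ih₂ =>
    exact (ih₁ hw).trans (ih₂ ((perm_of_eqvGen_commStep_s8 h).nodup_iff.mp hw))

theorem eqvGen_commStep_of_perm (hw : w.Nodup) (hp : w.Perm w')
    (hG : ∀ x y, G.Adj x y → ([x, y] <+ w ↔ [x, y] <+ w')) :
    Relation.EqvGen (CommStep G) w w' := by
  induction w' generalizing w with
  | nil => rw [List.perm_nil.mp hp]; exact .refl _
  | cons x t ih =>
    have hxt : x ∉ t := (List.nodup_cons.mp (hp.nodup_iff.mp hw)).1
    obtain ⟨u, v, rfl⟩ := List.append_of_mem (hp.mem_iff.mpr (.head t))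
    have hfront : ∀ y ∈ u, ¬G.Adj y x := fun y hy hyx => by
      have := (hG y x hyx).mp (List.Sublist.append (List.singleton_sublist.mpr hy) (by simp))
      rw [List.pair_sublist_cons_iff hyx.ne] at this
      exact hxt (this.subset (by simp))
    have hmove := eqvGen_commStep_append_cons_s8 (v := v) hfront
    have hw' : (x :: (u ++ v)).Nodup := (perm_of_eqvGen_commStep_s8 hmove).nodup_iff.mp hw
    refine .trans _ _ _ hmove (eqvGen_commStep_cons x (ih (List.nodup_cons.mp hw').2
      ((List.perm_cons x).mp ((perm_of_eqvGen_commStep_s8 hmove).symm.trans hp)) fun a b hab => ?_))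
    by_cases hax : a = x
    · subst hax
      exact iff_of_false (fun h => (List.nodup_cons.mp hw').1 (h.subset (by simp)))
        (fun h => hxt (h.subset (by simp)))
    rw [← List.pair_sublist_cons_iff (a := x) hax,
      ← List.pair_sublist_cons_iff (a := x) (l := t) hax,
      ← pair_sublist_iff_of_eqvGen_commStep hmove hw hab, hG a b hab]

theorem eqvGen_commStep_iff (hw : w.Nodup) :
    Relation.EqvGen (CommStep G) w w' ↔
      w.Perm w' ∧ ∀ x y, G.Adj x y → ([x, y] <+ w ↔ [x, y] <+ w') :=
  ⟨fun h => ⟨perm_of_eqvGen_commStep_s8 h, fun _ _ => pair_sublist_iff_of_eqvGen_commStep h hw⟩,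
    fun h => eqvGen_commStep_of_perm hw h.1 h.2⟩

end Commutation

theorem Nat.card_quotient_eq_card_of_range {α β : Type*} {r : Setoid α} (f : α → β)
    (hf : ∀ a b, r a b ↔ f a = f b) (T : Finset β) (hT : Set.range f = T) :
    Nat.card (Quotient r) = T.card := by
  obtain rfl : r = Setoid.ker f := Setoid.ext fun a b => (hf a b).trans Setoid.ker_def.symm
  rw [Nat.card_congr (Setoid.quotientKerEquivRange f), hT, Nat.card_coe_set_eq,
    Set.ncard_coe_finset]

open Finset

section Path

variable {n : ℕ}

def pathEdges (S : Finset (Fin n)) : Finset (Fin n) := {i ∈ S | ∃ j ∈ S, i.1 + 1 = j.1}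

def forwardEdges (w : List (Fin n)) : Finset (Fin n) :=
  {i | ∃ j : Fin n, i.1 + 1 = j.1 ∧ [i, j] <+ w}

def pathCode (w : List (Fin n)) : (_ : Finset (Fin n)) × Finset (Fin n) :=
  ⟨w.toFinset, forwardEdges w⟩

theorem pair_sublist_iff_mem_forwardEdges {w : List (Fin n)} {x y : Fin n} (h : x.1 + 1 = y.1) :
    [x, y] <+ w ↔ x ∈ forwardEdges w := by
  simp only [forwardEdges, mem_filter, mem_univ, true_and]
  refine ⟨fun hs => ⟨y, h, hs⟩, ?_⟩
  rintro ⟨j, hj, hs⟩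
  rwa [Fin.ext (hj.symm.trans h)] at hs

theorem forwardEdges_subset_pathEdges (w : List (Fin n)) :
    forwardEdges w ⊆ pathEdges w.toFinset := by
  intro i hi
  obtain ⟨j, hij, hs⟩ := by simpa [forwardEdges] using hi
  simpa [pathEdges] using ⟨hs.subset (by simp), j, hs.subset (by simp), hij⟩

theorem forwardEdges_eq_iff {w w' : List (Fin n)} (hw : w.Nodup) (hw' : w'.Nodup)
    (hp : w.Perm w') : forwardEdges w = forwardEdges w' ↔
      ∀ x y, (pathG n).Adj x y → ([x, y] <+ w ↔ [x, y] <+ w') := by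
  refine ⟨fun h x y hxy => ?_, fun h => ?_⟩
  · rcases hxy with hxy | hyx
    · rw [pair_sublist_iff_mem_forwardEdges hxy, pair_sublist_iff_mem_forwardEdges hxy, h]
    · have hne : x ≠ y := (pathG n).ne_of_adj (Or.inr hyx)
      rw [hw.pair_sublist_iff hne, hw'.pair_sublist_iff hne, hp.mem_iff, hp.mem_iff,
        pair_sublist_iff_mem_forwardEdges hyx, pair_sublist_iff_mem_forwardEdges hyx, h]
  · ext i
    simp only [forwardEdges, mem_filter, mem_univ, true_and]
    exact exists_congr fun j => and_congr_right fun hij => h i j (Or.inl hij)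

theorem pathCode_eq_iff {w w' : List (Fin n)} (hw : w.Nodup) (hw' : w'.Nodup) :
    pathCode w = pathCode w' ↔ Relation.EqvGen (CommStep (pathG n)) w w' := by
  rw [eqvGen_commStep_iff hw, pathCode, pathCode, Sigma.mk.injEq, heq_eq_eq]
  constructor
  · rintro ⟨hS, hF⟩
    have hp := List.perm_of_nodup_nodup_toFinset_eq hw hw' hS
    exact ⟨hp, (forwardEdges_eq_iff hw hw' hp).mp hF⟩
  · rintro ⟨hp, hG⟩
    exact ⟨List.toFinset_eq_of_perm _ _ hp, (forwardEdges_eq_iff hw hw' hp).mpr hG⟩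

theorem forwardEdges_cons_of_lt {a : Fin n} {l : List (Fin n)} (h : ∀ j ∈ l, j < a) :
    forwardEdges (a :: l) = forwardEdges l := by
  ext i
  simp only [forwardEdges, mem_filter, mem_univ, true_and]
  refine exists_congr fun j => and_congr_right fun hij => ?_
  by_cases hia : i = a
  · subst hia
    have hj : j ∉ l := fun hj => by have := Fin.lt_def.mp (h j hj); omega
    exact iff_of_false (by simpa [List.sublist_cons_iff, hj] using fun h => hj (h.subset (by simp)))
      fun h => hj (h.subset (by simp))
  · exact List.pair_sublist_cons_iff hia

theorem forwardEdges_append_singleton (a : Fin n) (l : List (Fin n)) :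
    forwardEdges (l ++ [a]) = forwardEdges l ∪ {i ∈ l.toFinset | i.1 + 1 = a.1} := by
  ext i
  simp only [forwardEdges, mem_union, mem_filter, mem_univ, true_and, List.mem_toFinset,
    List.pair_sublist_append_singleton_iff, and_or_left, exists_or]
  simp [and_comm]

theorem pathEdges_insert_of_lt {a : Fin n} {S : Finset (Fin n)} (hlt : ∀ x ∈ S, x < a) :
    pathEdges (insert a S) = pathEdges S ∪ {i ∈ S | i.1 + 1 = a.1} := by
  ext i
  have hlt' : ∀ x ∈ S, x.1 < a.1 := fun x hx => Fin.lt_def.mp (hlt x hx)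
  simp only [pathEdges, mem_union, mem_filter, mem_insert, exists_eq_or_imp]
  constructor
  · rintro ⟨rfl | hi, hia | ⟨j, hj, hij⟩⟩
    · omega
    · have := hlt' j hj; omega
    · exact Or.inr ⟨hi, hia⟩
    · exact Or.inl ⟨hi, j, hj, hij⟩
  · rintro (⟨hi, j, hj, hij⟩ | ⟨hi, hia⟩)
    · exact ⟨Or.inr hi, Or.inr ⟨j, hj, hij⟩⟩
    · exact ⟨Or.inr hi, Or.inl hia⟩

theorem exists_pathCode_eq (S : Finset (Fin n)) :
    ∀ F ⊆ pathEdges S, ∃ w : List (Fin n), w.Nodup ∧ pathCode w = ⟨S, F⟩ := by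
  induction S using Finset.induction_on_max with
  | empty =>
    intro F hF
    refine ⟨[], List.nodup_nil, ?_⟩
    simp_all [pathCode, forwardEdges, pathEdges]
  | insert a S hlt ih =>
    intro F hF
    rw [pathEdges_insert_of_lt hlt] at hF
    obtain ⟨w, hw, hcode⟩ := ih {i ∈ F | i.1 + 1 ≠ a.1} fun i hi => by
      rw [mem_filter] at hi
      simpa [hi.2] using hF hi.1
    simp only [pathCode, Sigma.mk.injEq, heq_eq_eq] at hcode ⊢
    obtain ⟨hS, hF'⟩ := hcode
    have hlt' : ∀ j ∈ w, j < a := fun j hj => hlt j (hS ▸ List.mem_toFinset.mpr hj)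
    have haw : a ∉ w := fun h => lt_irrefl a (hlt' a h)
    by_cases hpred : ∃ i ∈ F, i.1 + 1 = a.1
    · refine ⟨w ++ [a], hw.append (List.nodup_singleton a) (by simpa using haw), ?_, ?_⟩
      · simp [hS]
      · rw [forwardEdges_append_singleton, hF']
        ext i
        simp only [mem_union, mem_filter, hS]
        obtain ⟨i₀, hi₀, hi₀a⟩ := hpred
        by_cases hia : i.1 + 1 = a.1
        · obtain rfl : i = i₀ := Fin.ext (by omega)
          have hiS : i ∈ S := by
            simpa [hia] using (mem_union.mp (hF hi₀)).imp_left (mem_filter.mp · |>.1)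
          simp [hia, hiS, hi₀]
        · simp [hia]
    · refine ⟨a :: w, List.nodup_cons.mpr ⟨haw, hw⟩, by simp [hS], ?_⟩
      rw [forwardEdges_cons_of_lt hlt', hF']
      exact filter_true_of_mem fun i hi hia => hpred ⟨i, hi, hia⟩

def pathCodes (n k : ℕ) : Finset ((_ : Finset (Fin n)) × Finset (Fin n)) :=
  (powersetCard k univ).sigma fun S => (pathEdges S).powerset

theorem range_pathCode (k : ℕ) :
    Set.range (fun w : {w : List (Fin n) // w.Nodup ∧ w.length = k} => pathCode w.1) =
      pathCodes n k := by
  ext ⟨S, F⟩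
  simp only [Set.mem_range, pathCodes, coe_sigma, Set.mem_sigma_iff, mem_coe, mem_powersetCard,
    subset_univ, true_and, mem_powerset, Subtype.exists, exists_prop]
  constructor
  · rintro ⟨w, ⟨hw, rfl⟩, hcode⟩
    simp only [pathCode, Sigma.mk.injEq, heq_eq_eq] at hcode
    obtain ⟨rfl, rfl⟩ := hcode
    exact ⟨List.toFinset_card_of_nodup hw, forwardEdges_subset_pathEdges w⟩
  · rintro ⟨rfl, hF⟩
    obtain ⟨w, hw, hcode⟩ := exists_pathCode_eq S F hF
    refine ⟨w, ⟨hw, ?_⟩, hcode⟩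
    rw [← List.toFinset_card_of_nodup hw]
    exact congrArg (#·.1) hcode

theorem card_pathEdges (S : Finset (Fin n)) :
    #(pathEdges S) = #{i ∈ S.map Fin.valEmbedding | i + 1 ∈ S.map Fin.valEmbedding} := by
  rw [filter_map, card_map]
  congr 1
  ext i
  simp [pathEdges, eq_comm]

theorem bWords_pathG (n k : ℕ) :
    bWords (pathG n) k = ∑ S ∈ powersetCard k (range n), 2 ^ #{i ∈ S | i + 1 ∈ S} := by
  rw [bWords,
    Nat.card_quotient_eq_card_of_range _ (fun a b => (pathCode_eq_iff a.2.1 b.2.1).symm) _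
      (range_pathCode k), pathCodes, card_sigma, ← Nat.Iio_eq_range,
    ← Fin.map_valEmbedding_univ, powersetCard_map, sum_map]
  simp [card_pathEdges]

end Path

def pathWeight (S : Finset ℕ) : ℤ := (-1) ^ #S * 2 ^ #{i ∈ S | i + 1 ∈ S}

def weightSum (n : ℕ) : ℤ := ∑ S ∈ (range n).powerset, pathWeight S

def weightSumWithMax (n : ℕ) : ℤ := ∑ S ∈ (range n).powerset, pathWeight (insert n S)

theorem booleanNumber_pathG (n : ℕ) : booleanNumber (pathG n) = (-1) ^ n * weightSum n := by
  rw [booleanNumber, weightSum, Fintype.card_fin, sum_powerset, card_range]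
  congr 1
  refine sum_congr rfl fun k _ => ?_
  rw [bWords_pathG, Nat.cast_sum, mul_sum]
  refine sum_congr rfl fun S hS => ?_
  rw [pathWeight, (mem_powersetCard.mp hS).2]
  push_cast
  rfl

theorem card_filter_succ_mem_insert {m : ℕ} {S : Finset ℕ} (hS : ∀ i ∈ S, i ≤ m) :
    #{i ∈ insert (m + 1) S | i + 1 ∈ insert (m + 1) S} =
      #{i ∈ S | i + 1 ∈ S} + if m ∈ S then 1 else 0 := by
  have hm : m + 1 ∉ S := fun h => by have := hS _ h; omega
  rw [filter_insert, if_neg (by simpa using fun h => by have := hS _ h; omega)]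
  split_ifs with hmS
  · rw [← card_insert_of_notMem (s := {i ∈ S | i + 1 ∈ S}) (a := m)
      fun h => hm (mem_filter.mp h).2]
    congr 1
    ext i
    rcases eq_or_ne i m with rfl | hi <;> simp [*]
  · congr 1
    ext i
    simp only [mem_filter, mem_insert, add_left_inj, and_congr_right_iff, or_iff_right_iff_imp]
    rintro hi rfl
    exact absurd hi hmS

theorem pathWeight_insert {m : ℕ} {S : Finset ℕ} (hS : ∀ i ∈ S, i ≤ m) :
    pathWeight (insert (m + 1) S) = -((if m ∈ S then 2 else 1) * pathWeight S) := by
  have hm : m + 1 ∉ S := fun h => by have := hS _ h; omega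
  rw [pathWeight, pathWeight, card_filter_succ_mem_insert hS, card_insert_of_notMem hm]
  split_ifs <;> ring

theorem weightSum_succ (n : ℕ) : weightSum (n + 1) = weightSum n + weightSumWithMax n := by
  rw [weightSum, range_add_one, sum_powerset_insert notMem_range_self]
  rfl

theorem weightSumWithMax_succ (n : ℕ) :
    weightSumWithMax (n + 1) = -(weightSum n + 2 * weightSumWithMax n) := by
  rw [weightSumWithMax, range_add_one, sum_powerset_insert notMem_range_self, weightSum,
    weightSumWithMax, mul_sum, ← sum_add_distrib, ← sum_add_distrib, ← sum_neg_distrib]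
  refine sum_congr rfl fun S hS => ?_
  have hS' : ∀ i ∈ S, i < n := fun i hi => mem_range.mp (mem_powerset.mp hS hi)
  rw [pathWeight_insert fun i hi => (hS' i hi).le,
    pathWeight_insert (S := insert n S) (by simpa using fun i hi => (hS' i hi).le),
    if_neg fun h => lt_irrefl n (hS' n h), if_pos (mem_insert_self n S)]
  ring

theorem weightSums_eq_fib (M : ℕ) :
    weightSum (M + 1) = (-1) ^ (M + 1) * Nat.fib M ∧
      weightSumWithMax M = (-1) ^ (M + 1) * Nat.fib (M + 1) := by
  induction M with
  | zero =>
    rw [zero_add, weightSum_succ]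
    simp [weightSum, weightSumWithMax, pathWeight]
  | succ M ih =>
    have hmax : weightSumWithMax (M + 1) = (-1) ^ (M + 2) * Nat.fib (M + 2) := by
      rw [weightSumWithMax_succ, Nat.fib_add_two]
      push_cast
      linear_combination weightSum_succ M - ih.1 - ih.2
    refine ⟨?_, hmax⟩
    rw [weightSum_succ, ih.1, hmax, Nat.fib_add_two]
    push_cast
    ring

/-- **Boolean number of a path.**  For `n ≥ 1`, the path graph `P_n` (the unlabeled Coxeter
graph of `A_n` and `B_n`) satisfies `β(P_n) = f(n-1)`, where `f` is the Fibonacci sequence. -/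
theorem booleanNumber_pathGraph (n : ℕ) (hn : 1 ≤ n) :
    booleanNumber (pathG n) = (Nat.fib (n - 1) : ℤ) := by
  obtain ⟨M, rfl⟩ : ∃ M, n = M + 1 := ⟨n - 1, by omega⟩
  rw [booleanNumber_pathG, (weightSums_eq_fib M).1, ← mul_assoc, ← pow_add, ← two_mul,
    pow_mul]
  simp
end

section
/- If a finite simple graph G is the disjoint union of two graphs H_1 and H_2, then the boolean ideal 𝔅(G) is order-isomorphic to the product poset 𝔅(H_1) × 𝔅(H_2), via the map sending the class of an injective word w on G to the pair consisting of the class of the subword of w formed by the letters lying in H_1 and the class of the subword formed by the letters lying in H_2. -/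
/-- The disjoint union of two simple graphs. -/
def disjUnionGraph {V₁ V₂ : Type*} (H₁ : SimpleGraph V₁) (H₂ : SimpleGraph V₂) :
    SimpleGraph (V₁ ⊕ V₂) where
  Adj a b :=
    match a, b with
    | Sum.inl x, Sum.inl y => H₁.Adj x y
    | Sum.inr x, Sum.inr y => H₂.Adj x y
    | _, _ => False
  symm := ⟨by
    rintro (x | x) (y | y) h
    · exact H₁.adj_symm h
    · exact h
    · exact h
    · exact H₂.adj_symm h⟩
  loopless := ⟨by
    rintro (x | x) h
    · exact H₁.loopless.irrefl x h
    · exact H₂.loopless.irrefl x h⟩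

/-- The subword of an injective word on `V₁ ⊕ V₂` formed by the letters lying in `V₁`. -/
def projLeft {V₁ V₂ : Type*} (w : {w : List (V₁ ⊕ V₂) // w.Nodup}) :
    {u : List V₁ // u.Nodup} :=
  ⟨w.1.filterMap Sum.getLeft?,
    w.2.filterMap (by rintro (a | a) (b | b) c h1 h2 <;> simp_all)⟩

/-- The subword of an injective word on `V₁ ⊕ V₂` formed by the letters lying in `V₂`. -/
def projRight {V₁ V₂ : Type*} (w : {w : List (V₁ ⊕ V₂) // w.Nodup}) :
    {u : List V₂ // u.Nodup} :=
  ⟨w.1.filterMap Sum.getRight?,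
    w.2.filterMap (by rintro (a | a) (b | b) c h1 h2 <;> simp_all)⟩

/-!
In the disjoint union every letter of `H₁` commutes with every letter of `H₂`, so each word
is commutation-equivalent to its `H₁`-subword followed by its `H₂`-subword. Conversely a
commutation move on a word of the union either is a move in one of the two subwords or changes
neither.
Hence taking the two subwords is a bijection on classes, inverse to concatenation `(u, v) ↦ u v`.
Both maps preserve subsequences, which makes the bijection an order isomorphism.
-/

section CommutationEquivalence

variable {V W : Type*} {G : SimpleGraph V} {H : SimpleGraph W}

theorem CommStep.append (p s : List V) {w w' : List V} (h : CommStep G w w') :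
    CommStep G (p ++ w ++ s) (p ++ w' ++ s) := by
  obtain ⟨a, b, u, v, hab, rfl, rfl⟩ := h
  exact ⟨a, b, p ++ u, v ++ s, hab, by simp, by simp⟩

theorem commSetoid_map_of_commStep {f : List V → List W}
    (hf : ∀ w w', CommStep G w w' → commSetoid H (f w) (f w')) {w w' : List V}
    (h : commSetoid G w w') : commSetoid H (f w) (f w') :=
  Setoid.eqvGen_le (s := (commSetoid H).comap f) hf h

theorem commSetoid_append {w₁ w₁' w₂ w₂' : List V} (h₁ : commSetoid G w₁ w₁')
    (h₂ : commSetoid G w₂ w₂') : commSetoid G (w₁ ++ w₂) (w₁' ++ w₂') :=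
  (commSetoid G).trans
    (commSetoid_map_of_commStep (f := (· ++ w₂))
      (fun _ _ h => .rel _ _ (by simpa using h.append [] w₂)) h₁)
    (commSetoid_map_of_commStep (f := (w₁' ++ ·))
      (fun _ _ h => .rel _ _ (by simpa using h.append w₁' [])) h₂)

theorem commSetoid_filterMap (f : V → Option W)
    (hf : ∀ a b x y, f a = some x → f b = some y → H.Adj x y → G.Adj a b) {w w' : List V}
    (h : commSetoid G w w') : commSetoid H (w.filterMap f) (w'.filterMap f) := by
  refine commSetoid_map_of_commStep (fun _ _ hw => ?_) h
  obtain ⟨a, b, u, v, hab, rfl, rfl⟩ := hw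
  simp only [List.filterMap_append, List.filterMap_cons]
  rcases ha : f a with _ | x <;> rcases hb : f b with _ | y
  · exact (commSetoid H).refl _
  · exact (commSetoid H).refl _
  · exact (commSetoid H).refl _
  · exact .rel _ _ ⟨x, y, _, _, fun hxy => hab (hf a b x y ha hb hxy), rfl, rfl⟩

theorem commSetoid_map (f : V → W) (hf : ∀ a b, H.Adj (f a) (f b) → G.Adj a b)
    {w w' : List V} (h : commSetoid G w w') : commSetoid H (w.map f) (w'.map f) := by
  simpa only [List.filterMap_eq_map] using
    commSetoid_filterMap (some ∘ f) (by simpa using hf) h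

theorem commSetoid_cons_append_of_forall_not_adj (c : V) {L : List V} (s : List V)
    (h : ∀ x ∈ L, ¬ G.Adj c x) : commSetoid G (c :: (L ++ s)) (L ++ c :: s) := by
  induction L with
  | nil => exact (commSetoid G).refl _
  | cons x L ih =>
    refine (commSetoid G).trans (.rel _ _ ⟨c, x, [], L ++ s, h x (by simp), rfl, rfl⟩) ?_
    simpa using commSetoid_append ((commSetoid G).refl [x])
      (ih fun y hy => h y (List.mem_cons_of_mem x hy))

end CommutationEquivalence

namespace disjUnionGraph

variable {V₁ V₂ : Type*} {H₁ : SimpleGraph V₁} {H₂ : SimpleGraph V₂}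

theorem commSetoid_filterMap_getLeft? {w w' : List (V₁ ⊕ V₂)}
    (h : commSetoid (disjUnionGraph H₁ H₂) w w') :
    commSetoid H₁ (w.filterMap Sum.getLeft?) (w'.filterMap Sum.getLeft?) :=
  commSetoid_filterMap _
    (by simp only [Sum.getLeft?_eq_some_iff]; rintro _ _ x y rfl rfl; exact id) h

theorem commSetoid_filterMap_getRight? {w w' : List (V₁ ⊕ V₂)}
    (h : commSetoid (disjUnionGraph H₁ H₂) w w') :
    commSetoid H₂ (w.filterMap Sum.getRight?) (w'.filterMap Sum.getRight?) :=
  commSetoid_filterMap _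
    (by simp only [Sum.getRight?_eq_some_iff]; rintro _ _ x y rfl rfl; exact id) h

theorem commSetoid_map_inl_append_map_inr {u u' : List V₁} {v v' : List V₂}
    (hu : commSetoid H₁ u u') (hv : commSetoid H₂ v v') :
    commSetoid (disjUnionGraph H₁ H₂) (u.map Sum.inl ++ v.map Sum.inr)
      (u'.map Sum.inl ++ v'.map Sum.inr) :=
  commSetoid_append (commSetoid_map Sum.inl (fun _ _ => id) hu)
    (commSetoid_map Sum.inr (fun _ _ => id) hv)

theorem commSetoid_lefts_append_rights (w : List (V₁ ⊕ V₂)) :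
    commSetoid (disjUnionGraph H₁ H₂) w
      ((w.filterMap Sum.getLeft?).map Sum.inl ++ (w.filterMap Sum.getRight?).map Sum.inr) := by
  induction w with
  | nil => exact (commSetoid _).refl _
  | cons a w ih =>
    refine (commSetoid _).trans (commSetoid_append ((commSetoid _).refl [a]) ih) ?_
    rcases a with x | y <;>
      simp only [List.filterMap_cons, Sum.getLeft?_inl, Sum.getRight?_inl, Sum.getLeft?_inr,
        Sum.getRight?_inr, List.map_cons, List.cons_append, List.nil_append]
    · exact (commSetoid _).refl _
    · refine commSetoid_cons_append_of_forall_not_adj _ _ ?_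
      simp only [List.mem_map]
      rintro _ ⟨x, -, rfl⟩
      exact id

def joinWord (u : {u : List V₁ // u.Nodup}) (v : {v : List V₂ // v.Nodup}) :
    {w : List (V₁ ⊕ V₂) // w.Nodup} :=
  ⟨u.1.map Sum.inl ++ v.1.map Sum.inr, by
    simp [List.nodup_append, List.nodup_map_iff, Sum.inl_injective, Sum.inr_injective, u.2, v.2]⟩

theorem projLeft_joinWord (u : {u : List V₁ // u.Nodup}) (v : {v : List V₂ // v.Nodup}) :
    projLeft (joinWord u v) = u :=
  Subtype.ext (by simp [projLeft, joinWord, List.filterMap_map, Function.comp_def])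

theorem projRight_joinWord (u : {u : List V₁ // u.Nodup}) (v : {v : List V₂ // v.Nodup}) :
    projRight (joinWord u v) = v :=
  Subtype.ext (by simp [projRight, joinWord, List.filterMap_map, Function.comp_def])

def bIdealEquivProd : BIdeal (disjUnionGraph H₁ H₂) ≃ BIdeal H₁ × BIdeal H₂ where
  toFun := Quotient.lift (fun w => (mkClass H₁ (projLeft w), mkClass H₂ (projRight w)))
    fun _ _ h => Prod.ext (Quotient.sound (commSetoid_filterMap_getLeft? h))
      (Quotient.sound (commSetoid_filterMap_getRight? h))
  invFun p := Quotient.map₂ (sa := wordSetoid H₁) (sb := wordSetoid H₂) joinWord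
    (fun _ _ hu _ _ hv => commSetoid_map_inl_append_map_inr hu hv) p.1 p.2
  left_inv := Quotient.ind fun w =>
    Quotient.sound ((commSetoid _).symm (commSetoid_lefts_append_rights w.1))
  right_inv := fun ⟨p, q⟩ => Quotient.inductionOn₂ p q fun u v =>
    congrArg₂ Prod.mk (congrArg (mkClass H₁) (projLeft_joinWord u v))
      (congrArg (mkClass H₂) (projRight_joinWord u v))

theorem bIdealEquivProd_mkClass (w : {w : List (V₁ ⊕ V₂) // w.Nodup}) :
    bIdealEquivProd (mkClass (disjUnionGraph H₁ H₂) w) =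
      (mkClass H₁ (projLeft w), mkClass H₂ (projRight w)) :=
  rfl

theorem mkClass_joinWord_eq {u : {u : List V₁ // u.Nodup}} {v : {v : List V₂ // v.Nodup}}
    {a : BIdeal (disjUnionGraph H₁ H₂)} (hu : mkClass H₁ u = (bIdealEquivProd a).1)
    (hv : mkClass H₂ v = (bIdealEquivProd a).2) :
    mkClass (disjUnionGraph H₁ H₂) (joinWord u v) = a :=
  calc mkClass _ (joinWord u v) = bIdealEquivProd.symm (mkClass H₁ u, mkClass H₂ v) := rfl
    _ = a := by rw [hu, hv, Prod.mk.eta, Equiv.symm_apply_apply]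

theorem bLE_iff_bLE_bIdealEquivProd (a b : BIdeal (disjUnionGraph H₁ H₂)) :
    bLE (disjUnionGraph H₁ H₂) a b ↔
      bLE H₁ (bIdealEquivProd a).1 (bIdealEquivProd b).1 ∧
        bLE H₂ (bIdealEquivProd a).2 (bIdealEquivProd b).2 := by
  constructor
  · rintro ⟨w, w', rfl, rfl, hw⟩
    exact ⟨⟨_, _, rfl, rfl, hw.filterMap _⟩, ⟨_, _, rfl, rfl, hw.filterMap _⟩⟩
  · rintro ⟨⟨u, u', hu, hu', huu'⟩, ⟨v, v', hv, hv', hvv'⟩⟩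
    exact ⟨joinWord u v, joinWord u' v', mkClass_joinWord_eq hu hv, mkClass_joinWord_eq hu' hv',
      (huu'.map _).append (hvv'.map _)⟩

end disjUnionGraph

/-- **The boolean ideal of a disjoint union is the product of the boolean ideals:**
if `G = H₁ ⊔ H₂`, the map sending the class of a word `w` to the pair of classes of its
subwords with letters in `H₁` resp. `H₂` is an order isomorphism
`𝔅(G) ≅ 𝔅(H₁) × 𝔅(H₂)` (the target carrying the componentwise order). -/
theorem bIdeal_disjUnion_orderIso {V₁ V₂ : Type*}
    (H₁ : SimpleGraph V₁) (H₂ : SimpleGraph V₂) :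
    ∃ φ : BIdeal (disjUnionGraph H₁ H₂) ≃ BIdeal H₁ × BIdeal H₂,
      (∀ w : {w : List (V₁ ⊕ V₂) // w.Nodup},
        φ (mkClass (disjUnionGraph H₁ H₂) w) =
          (mkClass H₁ (projLeft w), mkClass H₂ (projRight w))) ∧
      (∀ a b : BIdeal (disjUnionGraph H₁ H₂),
        bLE (disjUnionGraph H₁ H₂) a b ↔
          bLE H₁ (φ a).1 (φ b).1 ∧ bLE H₂ (φ a).2 (φ b).2) :=
  ⟨disjUnionGraph.bIdealEquivProd, disjUnionGraph.bIdealEquivProd_mkClass,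
    disjUnionGraph.bLE_iff_bLE_bIdealEquivProd⟩
end

section
/- Let G be a finite simple graph with at least two vertices, let ℓ be a vertex of G of degree 1, and let v be the unique neighbor of ℓ. Then β(G) = β(G ∖ ℓ) + β(G ∖ {ℓ, v}), where G ∖ X denotes the induced subgraph on the complement of X and the empty graph is assigned β(∅) = 1 (which is automatic from the definition of β). -/
/-!
Commutation moves never swap adjacent letters, so whether the neighbour `v` of the leaf `l`
occurs before `l` in an injective word `w` (that is, `[v, l] <+ w`) depends only on the class
of `w`. As `l` commutes with every letter except `v`, that class is the class of
`w.erase l ++ [l]` if `v` precedes `l`, and of `l :: w.erase l` otherwise. So the classes of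
length `k + 1` on `G` together with the classes of length `k` avoiding `l` and `v` match the
classes of length `k + 1` avoiding `l` plus two copies of the classes of length `k` avoiding
`l`: the first copy receives `l :: w`, the second `w ++ [l]` when `v ∈ w` and `w` itself
otherwise. Hence `b_{k+1}(G) + b_k(G ∖ {l, v}) = b_{k+1}(G ∖ l) + 2 b_k(G ∖ l)`, and the
alternating sums of these identities give the recursion.
-/

namespace Relation.EqvGen

variable {α β : Type*} {r : α → α → Prop} {s : β → β → Prop}

theorem map_of_rel (f : α → β) (hf : ∀ a b, r a b → EqvGen s (f a) (f b)) {a b : α}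
    (h : EqvGen r a b) : EqvGen s (f a) (f b) := by
  induction h with
  | rel a b hab => exact hf a b hab
  | refl => exact .refl _
  | symm _ _ _ ih => exact .symm _ _ ih
  | trans _ _ _ _ _ ih₁ ih₂ => exact .trans _ _ _ ih₁ ih₂

theorem eq_of_rel (f : α → β) (hf : ∀ a b, r a b → f a = f b) {a b : α}
    (h : EqvGen r a b) : f a = f b :=
  eq_equivalence.eqvGen_iff.mp (h.map_of_rel f fun a b hab => .rel _ _ (hf a b hab))

end Relation.EqvGen

open Relation

namespace CommStep

variable {V W : Type*} {G : SimpleGraph V} {w w' : List V}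

theorem perm_s11 (h : CommStep G w w') : w.Perm w' := by
  obtain ⟨a, b, u, t, -, rfl, rfl⟩ := h
  exact .append_left u (.swap b a t)

theorem append_left (x : List V) (h : CommStep G w w') : CommStep G (x ++ w) (x ++ w') := by
  obtain ⟨a, b, u, t, hab, rfl, rfl⟩ := h
  exact ⟨a, b, x ++ u, t, hab, by simp, by simp⟩

theorem append_right (x : List V) (h : CommStep G w w') : CommStep G (w ++ x) (w' ++ x) := by
  obtain ⟨a, b, u, t, hab, rfl, rfl⟩ := h
  exact ⟨a, b, u, t ++ x, hab, by simp, by simp⟩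

theorem filter_eq (p : V → Bool) (hp : ∀ a b, p a → p b → a ≠ b → G.Adj a b)
    (h : CommStep G w w') : w.filter p = w'.filter p := by
  obtain ⟨a, b, u, t, hab, rfl, rfl⟩ := h
  by_cases hpab : p a ∧ p b
  · obtain rfl : a = b := not_not.mp fun hne => hab (hp a b hpab.1 hpab.2 hne)
    rfl
  · rcases not_and_or.mp hpab with ha | hb <;> simp [List.filter_cons, *]

theorem erase [DecidableEq V] (x : V) (h : CommStep G w w') :
    EqvGen (CommStep G) (w.erase x) (w'.erase x) := by
  obtain ⟨a, b, u, t, hab, rfl, rfl⟩ := h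
  by_cases hxu : x ∈ u
  · simp only [List.erase_append_left _ hxu]
    exact .rel _ _ ⟨a, b, u.erase x, t, hab, rfl, rfl⟩
  simp only [List.erase_append_right _ hxu, List.erase_cons]
  by_cases ha : a = x <;> by_cases hb : b = x <;>
    simp only [ha, hb, BEq.rfl, beq_iff_eq, ↓reduceIte] <;>
    first | exact .refl _ | exact .rel _ _ ⟨a, b, u, t.erase x, hab, rfl, rfl⟩

theorem filterMap {H : SimpleGraph W} (f : V → Option W)
    (hf : ∀ a b x y, x ∈ f a → y ∈ f b → H.Adj x y → G.Adj a b) (h : CommStep G w w') :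
    EqvGen (CommStep H) (w.filterMap f) (w'.filterMap f) := by
  obtain ⟨a, b, u, t, hab, rfl, rfl⟩ := h
  simp only [List.filterMap_append, List.filterMap_cons]
  rcases hfa : f a with _ | x <;> rcases hfb : f b with _ | y
  · exact .refl _
  · exact .refl _
  · exact .refl _
  · exact .rel _ _ ⟨x, y, _, _, fun hxy => hab (hf a b x y hfa hfb hxy), rfl, rfl⟩

theorem eqvGen_perm (h : EqvGen (CommStep G) w w') : w.Perm w' :=
  (List.Perm.eqv V).eqvGen_iff.mp (EqvGen.mono (fun _ _ => perm_s11) _ _ h)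

theorem eqvGen_append_left (x : List V) (h : EqvGen (CommStep G) w w') :
    EqvGen (CommStep G) (x ++ w) (x ++ w') :=
  h.map_of_rel (x ++ ·) fun _ _ hs => .rel _ _ (hs.append_left x)

theorem eqvGen_append_right (x : List V) (h : EqvGen (CommStep G) w w') :
    EqvGen (CommStep G) (w ++ x) (w' ++ x) :=
  h.map_of_rel (· ++ x) fun _ _ hs => .rel _ _ (hs.append_right x)

theorem eqvGen_filter_eq (p : V → Bool) (hp : ∀ a b, p a → p b → a ≠ b → G.Adj a b)
    (h : EqvGen (CommStep G) w w') : w.filter p = w'.filter p :=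
  h.eq_of_rel (List.filter p) fun _ _ => filter_eq p hp

theorem eqvGen_erase [DecidableEq V] (x : V) (h : EqvGen (CommStep G) w w') :
    EqvGen (CommStep G) (w.erase x) (w'.erase x) :=
  h.map_of_rel (List.erase · x) fun _ _ => erase x

theorem eqvGen_filterMap {H : SimpleGraph W} (f : V → Option W)
    (hf : ∀ a b x y, x ∈ f a → y ∈ f b → H.Adj x y → G.Adj a b)
    (h : EqvGen (CommStep G) w w') : EqvGen (CommStep H) (w.filterMap f) (w'.filterMap f) :=
  h.map_of_rel (List.filterMap f) fun _ _ => filterMap f hf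

theorem eqvGen_cons_append_singleton {x : V} :
    ∀ {u : List V}, (∀ y ∈ u, ¬ G.Adj x y) → EqvGen (CommStep G) (x :: u) (u ++ [x])
  | [], _ => .refl _
  | y :: u, hu =>
    have swap : CommStep G (x :: y :: u) (y :: x :: u) :=
      ⟨x, y, [], u, hu y (List.mem_cons_self ..), rfl, rfl⟩
    .trans _ _ _ (.rel _ _ swap)
      (eqvGen_append_left [y] (eqvGen_cons_append_singleton fun z hz => hu z (.tail _ hz)))

theorem eqvGen_comap_val_iff {P : V → Prop} {w w' : List {u // P u}} :
    EqvGen (CommStep (G.comap Subtype.val)) w w' ↔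
      EqvGen (CommStep G) (w.map Subtype.val) (w'.map Subtype.val) := by
  classical
  let restrict (z : V) : Option {u // P u} := if h : P z then some ⟨z, h⟩ else none
  have restrict_map (w : List {u // P u}) : (w.map Subtype.val).filterMap restrict = w := by
    simp [restrict, List.filterMap_map, Subtype.prop]
  constructor
  · intro h
    simpa only [List.filterMap_eq_map] using
      eqvGen_filterMap (some ∘ Subtype.val) (by simp) h
  · intro h
    simpa only [restrict_map] using
      eqvGen_filterMap restrict (by simp +contextual [restrict]) h

end CommStep

section Words

variable {V : Type*} (G : SimpleGraph V)

abbrev InjWords (P : V → Prop) (k : ℕ) : Type _ :=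
  {w : List V // w.Nodup ∧ w.length = k ∧ ∀ z ∈ w, P z}

abbrev CommClasses (P : V → Prop) (k : ℕ) : Type _ :=
  Quotient ((commSetoid G).comap (Subtype.val : InjWords P k → List V))

instance [Finite V] (P : V → Prop) (k : ℕ) : Finite (InjWords P k) :=
  ((List.finite_length_eq V k).subset fun _ hw => hw.2.1).to_subtype

theorem bWords_eq_card_commClasses (k : ℕ) :
    bWords G k = Nat.card (CommClasses G (fun _ => True) k) :=
  Nat.card_congr (Quotient.congr (Equiv.subtypeEquivRight fun _ => by simp) fun _ _ => Iff.rfl)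

theorem bWords_comap_subtype_val (P : V → Prop) (k : ℕ) :
    bWords (G.comap (Subtype.val : {u // P u} → V)) k = Nat.card (CommClasses G P k) := by
  let toWord (w : {w : List {u // P u} // w.Nodup ∧ w.length = k}) : InjWords P k :=
    ⟨w.1.map Subtype.val, w.2.1.map Subtype.val_injective, by simp [w.2.2], by simp +contextual⟩
  have bij : toWord.Bijective := by
    constructor
    · intro w w' h
      exact Subtype.ext (List.map_injective_iff.mpr Subtype.val_injective (congrArg Subtype.val h))
    · rintro ⟨w, hnd, hlen, hP⟩
      lift w to List {u // P u} using hP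
      exact ⟨⟨w, hnd.of_map _, by simpa using hlen⟩, rfl⟩
  exact Nat.card_congr
    (Quotient.congr (.ofBijective toWord bij) fun _ _ => CommStep.eqvGen_comap_val_iff)

theorem bWords_zero : bWords G 0 = 1 := by
  have : Subsingleton {w : List V // w.Nodup ∧ w.length = 0} :=
    ⟨fun w w' => Subtype.ext <| by
      rw [List.length_eq_zero_iff.mp w.2.2, List.length_eq_zero_iff.mp w'.2.2]⟩
  exact Nat.card_eq_one_iff_unique.mpr ⟨inferInstance, ⟨Quotient.mk _ ⟨[], by simp⟩⟩⟩

theorem bWords_eq_zero_of_card_lt [Fintype V] {k : ℕ} (hk : Fintype.card V < k) :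
    bWords G k = 0 := by
  have : IsEmpty {w : List V // w.Nodup ∧ w.length = k} :=
    ⟨fun ⟨w, hnd, hlen⟩ => by have := hnd.length_le_card; omega⟩
  exact Nat.card_of_isEmpty

namespace CommClasses

variable {G} {P Q : V → Prop} {k : ℕ}

def mono (hPQ : ∀ z, P z → Q z) : CommClasses G P k → CommClasses G Q k :=
  Quotient.map' (fun w => ⟨w.1, w.2.1, w.2.2.1, fun z hz => hPQ z (w.2.2.2 z hz)⟩) fun _ _ => id

theorem mk_eq_mk {a b : InjWords P k} (h : EqvGen (CommStep G) a.1 b.1) :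
    (Quotient.mk _ a : CommClasses G P k) = Quotient.mk _ b :=
  Quotient.sound h

end CommClasses

end Words

open List

theorem List.pair_sublist_append_cons_iff {V : Type*} {l v : V} {u t : List V} (hu : l ∉ u)
    (ht : l ∉ t) (hvl : v ≠ l) : [v, l] <+ u ++ l :: t ↔ v ∈ u := by
  induction u with
  | nil => simpa [sublist_cons_iff, hvl] using fun h => ht (h.subset (by simp))
  | cons y u ih =>
    rw [cons_append, sublist_cons_iff, ih fun h => hu (.tail _ h), mem_cons]
    simp [eq_comm, or_comm]

namespace CommStep

variable {V : Type*} {G : SimpleGraph V} {l v : V}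

theorem eqvGen_pair_sublist_iff [DecidableEq V] (hadj : G.Adj l v) {w w' : List V}
    (h : EqvGen (CommStep G) w w') : [v, l] <+ w ↔ [v, l] <+ w' := by
  let p (z : V) : Bool := z = v ∨ z = l
  have sublist_iff (w : List V) : [v, l] <+ w ↔ [v, l] <+ w.filter p :=
    ⟨fun hs => by simpa [p] using hs.filter p, fun hs => hs.trans filter_sublist⟩
  have hp : ∀ a b, p a → p b → a ≠ b → G.Adj a b := by
    simp only [p, decide_eq_true_eq]
    rintro a b (rfl | rfl) (rfl | rfl) hab <;>
      first | exact absurd rfl hab | exact hadj | exact hadj.symm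
  rw [sublist_iff w, sublist_iff w', eqvGen_filter_eq p hp h]

theorem eqvGen_leaf_front (huniq : ∀ u, G.Adj l u → u = v) {u t : List V} (hvu : v ∉ u) :
    EqvGen (CommStep G) (l :: (u ++ t)) (u ++ l :: t) := by
  simpa using eqvGen_append_right t
    (eqvGen_cons_append_singleton (G := G) fun y hy hly => hvu (huniq y hly ▸ hy))

theorem eqvGen_leaf_back (huniq : ∀ u, G.Adj l u → u = v) {u t : List V} (hvt : v ∉ t) :
    EqvGen (CommStep G) (u ++ t ++ [l]) (u ++ l :: t) := by
  simpa using eqvGen_append_left u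
    (eqvGen_cons_append_singleton (G := G) fun y hy hly => hvt (huniq y hly ▸ hy)).symm

end CommStep

section LeafBijection

variable {V : Type*} [DecidableEq V] (G : SimpleGraph V) (l v : V)

abbrev LeafSource (k : ℕ) : Type _ :=
  CommClasses G (fun _ => True) (k + 1) ⊕ CommClasses G (fun z => z ≠ l ∧ z ≠ v) k

abbrev LeafTarget (k : ℕ) : Type _ :=
  CommClasses G (· ≠ l) (k + 1) ⊕ (CommClasses G (· ≠ l) k ⊕ CommClasses G (· ≠ l) k)

def eraseLetter {P : V → Prop} {k : ℕ} (w : InjWords P (k + 1)) (hl : l ∈ w.1) :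
    InjWords (· ≠ l) k :=
  ⟨w.1.erase l, w.2.1.erase l, by rw [length_erase_of_mem hl, w.2.2.1]; rfl,
    fun _ hz => (w.2.1.mem_erase_iff.mp hz).1⟩

def leafSplitWord (k : ℕ) (w : InjWords (fun _ : V => True) (k + 1)) : LeafTarget G l k :=
  if hl : l ∈ w.1 then
    if [v, l] <+ w.1 then .inr (.inr (Quotient.mk _ (eraseLetter l w hl)))
    else .inr (.inl (Quotient.mk _ (eraseLetter l w hl)))
  else .inl (Quotient.mk _ ⟨w.1, w.2.1, w.2.2.1, fun _ hz h => hl (h ▸ hz)⟩)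

variable {G l v} in
theorem leafSplitWord_sound (hadj : G.Adj l v) (k : ℕ)
    (a b : InjWords (fun _ : V => True) (k + 1)) (h : EqvGen (CommStep G) a.1 b.1) :
    leafSplitWord G l v k a = leafSplitWord G l v k b := by
  have hmem : l ∈ a.1 ↔ l ∈ b.1 := (CommStep.eqvGen_perm h).mem_iff
  unfold leafSplitWord
  by_cases hl : l ∈ a.1
  · have herase : EqvGen (CommStep G) (eraseLetter l a hl).1 (eraseLetter l b (hmem.mp hl)).1 :=
      CommStep.eqvGen_erase l h
    simp only [dif_pos hl, dif_pos (hmem.mp hl), CommStep.eqvGen_pair_sublist_iff hadj h]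
    split_ifs <;> rw [CommClasses.mk_eq_mk herase]
  · rw [dif_neg hl, dif_neg (mt hmem.mpr hl)]
    exact congrArg Sum.inl (CommClasses.mk_eq_mk h)

def leafSplit (hadj : G.Adj l v) (k : ℕ) : LeafSource G l v k → LeafTarget G l k :=
  Sum.elim (Quotient.lift (leafSplitWord G l v k) (leafSplitWord_sound hadj k))
    fun q => .inr (.inr (q.mono fun _ => And.left))

def prependLeaf (k : ℕ) : CommClasses G (· ≠ l) k → CommClasses G (fun _ => True) (k + 1) :=
  Quotient.map'
    (fun w => ⟨l :: w.1, nodup_cons.mpr ⟨fun h => w.2.2.2 l h rfl, w.2.1⟩, by simp [w.2.2.1],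
      fun _ _ => trivial⟩)
    fun _ _ => CommStep.eqvGen_append_left [l]

def appendLeafWord (k : ℕ) (w : InjWords (· ≠ l) k) : LeafSource G l v k :=
  if hv : v ∈ w.1 then
    .inl (Quotient.mk _ ⟨w.1 ++ [l], w.2.1.append (nodup_singleton l)
      (by simpa using fun h => w.2.2.2 l h rfl), by simp [w.2.2.1], fun _ _ => trivial⟩)
  else
    .inr (Quotient.mk _
      ⟨w.1, w.2.1, w.2.2.1, fun z hz => ⟨w.2.2.2 z hz, fun h => hv (h ▸ hz)⟩⟩)

theorem appendLeafWord_sound (k : ℕ) (a b : InjWords (· ≠ l) k)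
    (h : EqvGen (CommStep G) a.1 b.1) : appendLeafWord G l v k a = appendLeafWord G l v k b := by
  have hmem : v ∈ a.1 ↔ v ∈ b.1 := (CommStep.eqvGen_perm h).mem_iff
  unfold appendLeafWord
  by_cases hv : v ∈ a.1
  · rw [dif_pos hv, dif_pos (hmem.mp hv)]
    exact congrArg Sum.inl (CommClasses.mk_eq_mk (CommStep.eqvGen_append_right [l] h))
  · rw [dif_neg hv, dif_neg (mt hmem.mpr hv)]
    exact congrArg Sum.inr (CommClasses.mk_eq_mk h)

def leafJoin (k : ℕ) : LeafTarget G l k → LeafSource G l v k :=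
  Sum.elim (fun q => .inl (q.mono fun _ _ => trivial))
    (Sum.elim (fun q => .inl (prependLeaf G l k q))
      (Quotient.lift (appendLeafWord G l v k) (appendLeafWord_sound G l v k)))

variable {G l v}

theorem leafJoin_leafSplitWord (hadj : G.Adj l v) (huniq : ∀ u, G.Adj l u → u = v) (k : ℕ)
    (w : InjWords (fun _ : V => True) (k + 1)) :
    leafJoin G l v k (leafSplitWord G l v k w) = .inl (Quotient.mk _ w) := by
  obtain ⟨w, hnd, hlen, -⟩ := w
  unfold leafSplitWord
  by_cases hl : l ∈ w
  swap
  · rw [dif_neg hl]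
    rfl
  rw [dif_pos hl]
  obtain ⟨u, t, rfl⟩ := append_of_mem hl
  obtain ⟨hlut, -⟩ := nodup_cons.mp (nodup_middle.mp hnd)
  rw [mem_append, not_or] at hlut
  have herase : (u ++ l :: t).erase l = u ++ t := by
    rw [erase_append_right _ hlut.1, erase_cons_head]
  have hsub := pair_sublist_append_cons_iff hlut.1 hlut.2 hadj.ne.symm
  split_ifs with hvl
  · have hvu := hsub.mp hvl
    have hvt : v ∉ t := fun hvt => (nodup_append.mp hnd).2.2 v hvu v (.tail _ hvt) rfl
    show appendLeafWord G l v k _ = _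
    rw [appendLeafWord, dif_pos (by simp [eraseLetter, herase, hvu])]
    refine congrArg Sum.inl (CommClasses.mk_eq_mk ?_)
    show EqvGen (CommStep G) ((u ++ l :: t).erase l ++ [l]) (u ++ l :: t)
    rw [herase]
    exact CommStep.eqvGen_leaf_back huniq hvt
  · refine congrArg Sum.inl (CommClasses.mk_eq_mk ?_)
    show EqvGen (CommStep G) (l :: (u ++ l :: t).erase l) (u ++ l :: t)
    rw [herase]
    exact CommStep.eqvGen_leaf_front huniq (mt hsub.mpr hvl)

def leafEquiv (hadj : G.Adj l v) (huniq : ∀ u, G.Adj l u → u = v) (k : ℕ) :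
    LeafSource G l v k ≃ LeafTarget G l k where
  toFun := leafSplit G l v hadj k
  invFun := leafJoin G l v k
  left_inv := by
    rintro (q | q) <;> induction q using Quotient.ind with | _ w => ?_
    · exact leafJoin_leafSplitWord hadj huniq k w
    · show appendLeafWord G l v k _ = _
      rw [appendLeafWord, dif_neg fun hv => (w.2.2.2 v hv).2 rfl]
  right_inv := by
    rintro (q | q | q) <;> induction q using Quotient.ind with | _ w => ?_
    · show leafSplitWord G l v k _ = _
      rw [leafSplitWord, dif_neg fun hl => w.2.2.2 l hl rfl]
    · have hlw : l ∉ w.1 := fun hl => w.2.2.2 l hl rfl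
      show leafSplitWord G l v k _ = _
      rw [leafSplitWord, dif_pos (mem_cons_self ..), if_neg]
      · simp [eraseLetter]
      · exact fun h => not_mem_nil
          ((pair_sublist_append_cons_iff (u := []) not_mem_nil hlw hadj.ne.symm).mp h)
    · have hlw : l ∉ w.1 := fun hl => w.2.2.2 l hl rfl
      show leafSplit G l v hadj k (appendLeafWord G l v k w) = _
      by_cases hv : v ∈ w.1
      · rw [appendLeafWord, dif_pos hv]
        show leafSplitWord G l v k _ = _
        rw [leafSplitWord, dif_pos (mem_append_right _ (mem_singleton_self l)),
          if_pos ((pair_sublist_append_cons_iff hlw not_mem_nil hadj.ne.symm).mpr hv)]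
        simp [eraseLetter, erase_append_right _ hlw]
      · rw [appendLeafWord, dif_neg hv]
        rfl

end LeafBijection

theorem bWords_succ_add_bWords_eq {V : Type*} [Finite V] [DecidableEq V] {G : SimpleGraph V}
    {l v : V} (hadj : G.Adj l v) (huniq : ∀ u, G.Adj l u → u = v) (k : ℕ) :
    bWords G (k + 1) + bWords (G.comap (Subtype.val : {u // u ≠ l ∧ u ≠ v} → V)) k =
      bWords (G.comap (Subtype.val : {u // u ≠ l} → V)) (k + 1) +
        2 * bWords (G.comap (Subtype.val : {u // u ≠ l} → V)) k := by
  rw [bWords_eq_card_commClasses, bWords_comap_subtype_val, bWords_comap_subtype_val,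
    bWords_comap_subtype_val, ← Nat.card_sum, Nat.card_congr (leafEquiv hadj huniq k),
    Nat.card_sum, Nat.card_sum]
  ring

theorem sum_range_alternating_of_recurrence {a c d : ℕ → ℤ} (h0 : a 0 = c 0)
    (h : ∀ k, a (k + 1) + d k = c (k + 1) + 2 * c k) (n : ℕ) :
    ∑ k ∈ Finset.range (n + 1), (-1) ^ k * a k =
      ∑ k ∈ Finset.range (n + 1), (-1) ^ k * d k -
        ∑ k ∈ Finset.range (n + 1), (-1) ^ k * c k + (-1) ^ n * (2 * c n - d n) := by
  induction n with
  | zero => simp only [zero_add, Finset.sum_range_one, pow_zero, one_mul]; linarith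
  | succ n ih =>
    rw [Finset.sum_range_succ, ih, Finset.sum_range_succ _ (n + 1), Finset.sum_range_succ _ (n + 1)]
    linear_combination (-1) ^ (n + 1) * h n

theorem booleanNumber_eq_sum_range {V : Type*} [Fintype V] (G : SimpleGraph V) {N : ℕ}
    (hN : Fintype.card V ≤ N) :
    booleanNumber G =
      (-1) ^ Fintype.card V * ∑ k ∈ Finset.range (N + 1), (-1) ^ k * (bWords G k : ℤ) := by
  have tail :
      ∑ k ∈ Finset.Ico (Fintype.card V + 1) (N + 1), (-1) ^ k * (bWords G k : ℤ) = 0 :=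
    Finset.sum_eq_zero fun k hk => by
      rw [bWords_eq_zero_of_card_lt G (Finset.mem_Ico.mp hk).1, Nat.cast_zero, mul_zero]
  rw [booleanNumber, ← Finset.sum_range_add_sum_Ico _ (Nat.succ_le_succ hN), tail, add_zero]

theorem Fintype.card_subtype_ne_add_one {V : Type*} [Fintype V] [DecidableEq V] (a : V) :
    Fintype.card {u // u ≠ a} + 1 = Fintype.card V := by
  rw [Fintype.card_subtype_compl, Fintype.card_subtype_eq]
  have := Fintype.card_pos_iff.mpr ⟨a⟩
  omega

theorem Fintype.card_subtype_and_ne_add_one {V : Type*} [Fintype V] [DecidableEq V]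
    {p : V → Prop} [DecidablePred p] {a : V} (ha : p a) :
    Fintype.card {u // p u ∧ u ≠ a} + 1 = Fintype.card {u // p u} := by
  simp only [Fintype.card_subtype]
  rw [← Finset.card_erase_add_one (Finset.mem_filter.mpr ⟨Finset.mem_univ a, ha⟩)]
  congr 2
  ext u
  simp [and_comm]

/-- **Leaf recursion for the boolean number.**  If `ℓ` is a vertex of degree 1 in `G`
with unique neighbor `v`, then `β(G) = β(G ∖ ℓ) + β(G ∖ {ℓ, v})`, where `G ∖ X` is the
induced subgraph on the complement of `X`. -/
theorem booleanNumber_leaf_recursion {V : Type*} [Fintype V] [DecidableEq V]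
    (G : SimpleGraph V) (l v : V) (hadj : G.Adj l v)
    (huniq : ∀ u : V, G.Adj l u → u = v) :
    booleanNumber G =
      booleanNumber (G.comap (fun u : {u : V // u ≠ l} => (u : V))) +
      booleanNumber (G.comap (fun u : {u : V // u ≠ l ∧ u ≠ v} => (u : V))) := by
  set m := Fintype.card {u : V // u ≠ l ∧ u ≠ v}
  have card_ne : Fintype.card {u : V // u ≠ l} = m + 1 :=
    (Fintype.card_subtype_and_ne_add_one (p := (· ≠ l)) hadj.ne.symm).symm
  have card_V : Fintype.card V = m + 2 := by
    rw [← Fintype.card_subtype_ne_add_one l, card_ne]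
  have hsum := sum_range_alternating_of_recurrence
    (a := fun k => (bWords G k : ℤ))
    (c := fun k => (bWords (G.comap (fun u : {u : V // u ≠ l} => (u : V))) k : ℤ))
    (d := fun k => (bWords (G.comap (fun u : {u : V // u ≠ l ∧ u ≠ v} => (u : V))) k : ℤ))
    (by simp [bWords_zero]) (fun k => by exact_mod_cast bWords_succ_add_bWords_eq hadj huniq k)
    (m + 2)
  rw [booleanNumber_eq_sum_range G card_V.le, hsum,
    booleanNumber_eq_sum_range _ (N := m + 2) (by omega),
    booleanNumber_eq_sum_range _ (N := m + 2) (by omega),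
    bWords_eq_zero_of_card_lt _ (by omega), bWords_eq_zero_of_card_lt _ (by omega), card_ne, card_V]
  ring
end

section
/- Let K_n denote the complete graph on n vertices. Then β(K_1) = 0, β(K_2) = 1, and for all n ≥ 3, β(K_n) = (n−1) · ( β(K_{n−1}) + β(K_{n−2}) ). -/
/-!
In `K_n` no two letters commute, so commutation classes are single words and
`b_k(K_n) = n (n-1) ⋯ (n-k+1)` is a falling factorial. The alternating sum defining `β(K_n)` is
then the inclusion–exclusion formula for the number of derangements of `n` letters, and the
recursion is the classical one for derangement numbers.
-/

theorem commSetoid_top {V : Type*} : commSetoid (⊤ : SimpleGraph V) = ⊥ := by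
  ext w w'
  refine ⟨fun h => ?_, fun h => h ▸ Relation.EqvGen.refl w⟩
  induction h with
  | rel _ _ h =>
    obtain ⟨a, b, u, v, hab, rfl, rfl⟩ := h
    obtain rfl : a = b := by simpa using hab
    rfl
  | refl => rfl
  | symm _ _ _ ih => exact ih.symm
  | trans _ _ _ _ _ ih₁ ih₂ => exact ih₁.trans ih₂

theorem natCard_nodup_length_eq_descFactorial (V : Type*) [Fintype V] (k : ℕ) :
    Nat.card {w : List V // w.Nodup ∧ w.length = k} = (Fintype.card V).descFactorial k := by
  let ofEmbedding (e : Fin k ↪ V) : {w : List V // w.Nodup ∧ w.length = k} :=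
    ⟨List.ofFn e, List.nodup_ofFn.2 e.injective, List.length_ofFn⟩
  have hbij : Function.Bijective ofEmbedding := by
    refine ⟨fun e e' h => DFunLike.coe_injective (List.ofFn_injective (congrArg Subtype.val h)),
      fun ⟨w, hnd, hlen⟩ => ?_⟩
    subst hlen
    exact ⟨⟨w.get, List.nodup_iff_injective_get.1 hnd⟩, Subtype.ext (List.ofFn_get w)⟩
  rw [← Nat.card_eq_of_bijective ofEmbedding hbij, Nat.card_eq_fintype_card,
    Fintype.card_embedding_eq, Fintype.card_fin]

theorem bWords_top (V : Type*) [Fintype V] (k : ℕ) :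
    bWords (⊤ : SimpleGraph V) k = (Fintype.card V).descFactorial k := by
  have hcomap :
      Setoid.comap (fun w : {w : List V // w.Nodup ∧ w.length = k} => w.1) ⊥ = ⊥ :=
    Setoid.ext fun _ _ => Subtype.ext_iff.symm
  rw [bWords, commSetoid_top, hcomap, Nat.card_congr Setoid.quotientBotEquiv,
    natCard_nodup_length_eq_descFactorial]

theorem numDerangements_eq_alternating_sum_descFactorial (n : ℕ) :
    (numDerangements n : ℤ) =
      (-1) ^ n * ∑ k ∈ Finset.range (n + 1), (-1) ^ k * (n.descFactorial k : ℤ) := by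
  rw [numDerangements_sum, ← Finset.sum_range_reflect, Finset.mul_sum]
  refine Finset.sum_congr rfl fun k hk => ?_
  have hkn : k ≤ n := Finset.mem_range_succ_iff.1 hk
  have hasc : (n - k + 1).ascFactorial (n - (n - k)) = n.descFactorial k := by
    rw [← Nat.add_descFactorial_eq_ascFactorial, Nat.sub_sub_self hkn, Nat.sub_add_cancel hkn]
  have hsign : (-1 : ℤ) ^ (n - k) = (-1) ^ n * (-1) ^ k := by
    rw [← pow_add, show n + k = (n - k) + 2 * k by omega, pow_add, pow_mul]
    simp
  rw [Nat.add_sub_cancel, hasc, hsign, mul_assoc]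

theorem booleanNumber_top (V : Type*) [Fintype V] :
    booleanNumber (⊤ : SimpleGraph V) = numDerangements (Fintype.card V) := by
  simp only [booleanNumber, bWords_top, numDerangements_eq_alternating_sum_descFactorial]

/-- **Boolean numbers of complete graphs.**  `β(K_1) = 0`, `β(K_2) = 1`, and for all
`n ≥ 3`, `β(K_n) = (n-1)(β(K_{n-1}) + β(K_{n-2}))`. -/
theorem booleanNumber_completeGraph_recursion :
    booleanNumber (⊤ : SimpleGraph (Fin 1)) = 0 ∧
    booleanNumber (⊤ : SimpleGraph (Fin 2)) = 1 ∧
    ∀ n : ℕ, 3 ≤ n →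
      booleanNumber (⊤ : SimpleGraph (Fin n)) =
        ((n : ℤ) - 1) *
          (booleanNumber (⊤ : SimpleGraph (Fin (n - 1))) +
            booleanNumber (⊤ : SimpleGraph (Fin (n - 2)))) := by
  simp only [booleanNumber_top, Fintype.card_fin]
  refine ⟨rfl, rfl, fun n hn => ?_⟩
  obtain ⟨m, rfl⟩ : ∃ m, n = m + 2 := ⟨n - 2, by omega⟩
  rw [Nat.add_sub_cancel, show m + 2 - 1 = m + 1 from rfl, numDerangements_add_two]
  push_cast
  ring
end
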